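/- arXiv:2001.03395 — 6 statements merged into one kernel-verified Lean document; each statement's English description precedes it below -/
import Mathlib

section
/- In the Cayley–Dickson doubling A = CD(B, 0) of a quadratic associative division algebra B, an element (a, b) is invertible if and only if a ≠ 0, and the set of non-invertible elements equals the two-sided ideal {0} × B, which is generated by t = (0,1) and satisfies ({0} × B)² = 0. -/
/-- The Cayley–Dickson multiplication with parameter `ζ = 0`:
`(a,b) · (c,d) = (ac, ā d + c b)`. -/
def cdMulZero {B : Type*} [Mul B] [Add B] (conj : B → B) (p q : B × B) : B × B :=
  (p.1 * q.1, conj p.1 * q.2 + q.1 * p.2)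

/-- In `A = CD(B,0)` over a quadratic associative division algebra `B`: an element
`(a,b)` is invertible iff `a ≠ 0`; the set of non-invertible elements is `{0} × B`,
which is a two-sided ideal, is generated by `t = (0,1)`, and squares to zero. -/
theorem cayleyDickson_zero_units_and_radical
    (K : Type*) [Field K] (B : Type*) [DivisionRing B] [Algebra K B]
    (conj : B →ₗ[K] B)
    (hinv : ∀ b : B, conj (conj b) = b)
    (hanti : ∀ x y : B, conj (x * y) = conj y * conj x)
    (hone : conj 1 = 1)
    (NB : B → K)
    (hnm : ∀ b : B, b * conj b = algebraMap K B (NB b)) :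
    (∀ a b : B,
        (∃ q : B × B, cdMulZero conj (a, b) q = ((1 : B), (0 : B)) ∧
            cdMulZero conj q (a, b) = ((1 : B), (0 : B))) ↔ a ≠ 0) ∧
    ({p : B × B | ¬ ∃ q : B × B, cdMulZero conj p q = ((1 : B), (0 : B)) ∧
        cdMulZero conj q p = ((1 : B), (0 : B))} = {p : B × B | p.1 = 0}) ∧
    (∀ (b : B) (x : B × B), (cdMulZero conj x ((0 : B), b)).1 = 0 ∧
        (cdMulZero conj ((0 : B), b) x).1 = 0) ∧
    (∀ b : B, ∃ x : B × B, cdMulZero conj ((0 : B), (1 : B)) x = ((0 : B), b)) ∧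
    (∀ b c : B, cdMulZero conj ((0 : B), b) ((0 : B), c) = 0) := by
  -- conjugation of an inverse
  have hinv' : ∀ a : B, a ≠ 0 → conj a⁻¹ = (conj a)⁻¹ := by
    intro a ha
    have h1 : conj a * conj a⁻¹ = 1 := by
      rw [← hanti, inv_mul_cancel₀ ha, hone]
    have hca : conj a ≠ 0 := by
      intro h
      apply one_ne_zero (α := B)
      rw [← h1, h, zero_mul]
    exact (inv_eq_of_mul_eq_one_right h1).symm
  -- a commutes with conj a
  have hcomm : ∀ a : B, Commute a (conj a) := by
    intro a
    rcases eq_or_ne a 0 with h | h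
    · simp [h, Commute, SemiconjBy]
    · have key : a * (a * conj a) = a * (conj a * a) := by
        rw [hnm a, ← mul_assoc, ← Algebra.commutes (NB a) a, ← hnm a, mul_assoc]
      exact mul_left_cancel₀ h key
  -- main invertibility claim
  have main : ∀ a b : B,
      (∃ q : B × B, cdMulZero conj (a, b) q = ((1 : B), (0 : B)) ∧
          cdMulZero conj q (a, b) = ((1 : B), (0 : B))) ↔ a ≠ 0 := by
    intro a b
    constructor
    · rintro ⟨q, hq, -⟩ rfl
      have := congrArg Prod.fst hq
      simp [cdMulZero] at this
    · intro ha
      have hca : conj a ≠ 0 := by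
        intro h
        apply ha
        have := congrArg conj h
        rwa [hinv, map_zero] at this
      refine ⟨(a⁻¹, -(a⁻¹ * ((conj a)⁻¹ * b))), ?_, ?_⟩
      · have h2 : -(conj a * (a⁻¹ * ((conj a)⁻¹ * b))) + a⁻¹ * b = 0 := by
          have hc : conj a * a⁻¹ = a⁻¹ * conj a := ((hcomm a).inv_left₀).symm.eq
          rw [← mul_assoc, hc, mul_assoc, ← mul_assoc (conj a),
            mul_inv_cancel₀ hca, one_mul, neg_add_cancel]
        simp [cdMulZero, mul_inv_cancel₀ ha, h2]
      · have h2 : conj a⁻¹ * b + -(a * (a⁻¹ * ((conj a)⁻¹ * b))) = 0 := by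
          rw [hinv' a ha, ← mul_assoc, mul_inv_cancel₀ ha, one_mul,
            add_neg_cancel]
        simp [cdMulZero, inv_mul_cancel₀ ha, h2]
  refine ⟨main, ?_, ?_, ?_, ?_⟩
  · ext ⟨a, b⟩
    simp only [Set.mem_setOf_eq]
    rw [main a b]
    simp
  · intro b x
    constructor <;> simp [cdMulZero]
  · intro b
    exact ⟨(b, 0), by simp [cdMulZero]⟩
  · intro b c
    simp [cdMulZero, Prod.ext_iff]
end

section
/- Let X ⊆ PG(N, 2) span PG(N, 2), N > 2, with a family Ξ of planes each meeting X in a conic (= frame of a plane over F₂, i.e. 3 points no two on a common line of X), such that (MM1) any two points of X lie in a member of Ξ and (MM2*) any two distinct members of Ξ meet in exactly one point of X. Then |X| = 7 and N ≤ 6; moreover N ≠ 4. -/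
/-!
The members of `Ξ` cut `X` in the lines of an incidence structure with three points on every line,
in which any two points are joined and any two lines meet in exactly one point: a projective plane
of order 2, so `|X| = 7`, and `N ≤ 6` because `X` spans.

Because every line is a frame of its plane, no nonempty set of at most four points of `X` sums to
zero: three such points would lie on one line, and for four points `x + y = z + w` would be the
common point of the lines `xy` and `zw`. Thus the linear relations among the seven points form a
binary code of length 7 and dimension `6 - N` with minimum weight at least 5. A binary code of
dimension at least 2 and length `n` has a nonzero word of weight at most `2n/3`, since the weights
of `u`, `w` and `u + w` add up to at most `2n`; hence `N ≥ 5`.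
-/

open Finset Module

namespace Configuration

variable {P L : Type*} [Membership P L]

theorem exists_mem_ne_ne_of_two_lt_pointCount {l : L} (hl : 2 < pointCount P l) (p q : P) :
    ∃ r ∈ l, r ≠ p ∧ r ≠ q := by
  by_contra! h
  have hsub : {r : P | r ∈ l} ⊆ {p, q} := fun r hr ↦ by
    by_cases hrp : r = p
    · exact .inl hrp
    · exact .inr (h r hr hrp)
  have hle : pointCount P l ≤ 2 := by
    change Nat.card {r : P | r ∈ l} ≤ 2
    rw [Nat.card_coe_set_eq]
    exact (Set.ncard_le_ncard hsub).trans ((Set.ncard_insert_le p {q}).trans_eq (by simp))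
  omega

theorem exists_config_of_two_lt_pointCount [Nontrivial L]
    (join : ∀ p q : P, p ≠ q → ∃ l : L, p ∈ l ∧ q ∈ l)
    (meet : ∀ l m : L, l ≠ m → ∃! p : P, p ∈ l ∧ p ∈ m) (hcount : ∀ l : L, 2 < pointCount P l) :
    ∃ (p₁ p₂ p₃ : P) (l₁ l₂ l₃ : L),
      p₁ ∉ l₂ ∧ p₁ ∉ l₃ ∧ p₂ ∉ l₁ ∧ p₂ ∈ l₂ ∧ p₂ ∈ l₃ ∧ p₃ ∉ l₁ ∧ p₃ ∈ l₂ ∧ p₃ ∉ l₃ := by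
  have unique {l m : L} (hlm : l ≠ m) {p q : P} (hpl : p ∈ l) (hpm : p ∈ m) (hql : q ∈ l)
      (hqm : q ∈ m) : p = q :=
    (meet l m hlm).unique ⟨hpl, hpm⟩ ⟨hql, hqm⟩
  obtain ⟨l₂, l₃, h₂₃⟩ := exists_pair_ne L
  obtain ⟨p₂, ⟨hp₂l₂, hp₂l₃⟩, -⟩ := meet l₂ l₃ h₂₃
  obtain ⟨p₃, hp₃l₂, hp₃p₂, -⟩ := exists_mem_ne_ne_of_two_lt_pointCount (hcount l₂) p₂ p₂
  obtain ⟨a, hal₂, hap₂, hap₃⟩ := exists_mem_ne_ne_of_two_lt_pointCount (hcount l₂) p₂ p₃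
  obtain ⟨c, hcl₃, hcp₂, -⟩ := exists_mem_ne_ne_of_two_lt_pointCount (hcount l₃) p₂ p₂
  have hal₃ : a ∉ l₃ := fun h ↦ hap₂ (unique h₂₃ hal₂ h hp₂l₂ hp₂l₃)
  have hcl₂ : c ∉ l₂ := fun h ↦ hcp₂ (unique h₂₃ h hcl₃ hp₂l₂ hp₂l₃)
  obtain ⟨l₁, hal₁, hcl₁⟩ := join a c (ne_of_mem_of_not_mem hal₂ hcl₂)
  obtain ⟨p₁, hp₁l₁, hp₁a, hp₁c⟩ := exists_mem_ne_ne_of_two_lt_pointCount (hcount l₁) a c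
  have h₁₂ : l₁ ≠ l₂ := ne_of_mem_of_not_mem' hcl₁ hcl₂
  have h₁₃ : l₁ ≠ l₃ := ne_of_mem_of_not_mem' hal₁ hal₃
  exact ⟨p₁, p₂, p₃, l₁, l₂, l₃, fun h ↦ hp₁a (unique h₁₂ hp₁l₁ h hal₁ hal₂),
    fun h ↦ hp₁c (unique h₁₃ hp₁l₁ h hcl₁ hcl₃), fun h ↦ hap₂ (unique h₁₂ hal₁ hal₂ h hp₂l₂),
    hp₂l₂, hp₂l₃, fun h ↦ hap₃ (unique h₁₂ hal₁ hal₂ h hp₃l₂), hp₃l₂,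
    fun h ↦ hp₃p₂ (unique h₂₃ hp₃l₂ h hp₂l₂ hp₂l₃)⟩

noncomputable abbrev ProjectivePlane.ofTwoLtPointCount [Nontrivial L]
    (join : ∀ p q : P, p ≠ q → ∃ l : L, p ∈ l ∧ q ∈ l)
    (meet : ∀ l m : L, l ≠ m → ∃! p : P, p ∈ l ∧ p ∈ m) (hcount : ∀ l : L, 2 < pointCount P l) :
    ProjectivePlane P L where
  exists_point l := by
    obtain ⟨m, hml⟩ := exists_ne l
    obtain ⟨p, ⟨hpm, hpl⟩, hp⟩ := meet m l hml
    obtain ⟨q, hqm, hqp, -⟩ := exists_mem_ne_ne_of_two_lt_pointCount (hcount m) p p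
    exact ⟨q, fun hql ↦ hqp (hp q ⟨hqm, hql⟩)⟩
  exists_line p := by
    obtain ⟨-, p₂, p₃, l₁, l₂, l₃, -, -, hp₂l₁, hp₂l₂, hp₂l₃, -, hp₃l₂, hp₃l₃⟩ :=
      exists_config_of_two_lt_pointCount join meet hcount
    by_contra! hp
    have hpp₂ := (meet l₂ l₃ (ne_of_mem_of_not_mem' hp₃l₂ hp₃l₃)).unique ⟨hp l₂, hp l₃⟩
      ⟨hp₂l₂, hp₂l₃⟩
    exact hp₂l₁ (hpp₂ ▸ hp l₁)
  eq_or_eq {p q l m} hpl hql hpm hqm := or_iff_not_imp_right.mpr fun hlm ↦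
    (meet l m hlm).unique ⟨hpl, hpm⟩ ⟨hql, hqm⟩
  mkPoint hlm := (meet _ _ hlm).exists.choose
  mkPoint_ax hlm := (meet _ _ hlm).exists.choose_spec
  mkLine hpq := (join _ _ hpq).choose
  mkLine_ax hpq := (join _ _ hpq).choose_spec
  exists_config := exists_config_of_two_lt_pointCount join meet hcount

theorem card_points_eq_seven_of_pointCount_eq_three [Fintype P] [Finite L] [Nontrivial L]
    (join : ∀ p q : P, p ≠ q → ∃ l : L, p ∈ l ∧ q ∈ l)
    (meet : ∀ l m : L, l ≠ m → ∃! p : P, p ∈ l ∧ p ∈ m) (three : ∀ l : L, pointCount P l = 3) :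
    Fintype.card P = 7 := by
  let := ProjectivePlane.ofTwoLtPointCount join meet fun l ↦ by simp [three]
  have horder : ProjectivePlane.order P L = 2 := by
    have := ProjectivePlane.pointCount_eq P (Classical.arbitrary L)
    rw [three] at this
    omega
  rw [ProjectivePlane.card_points P L, horder]
  norm_num

end Configuration

theorem LinearIndepOn.sum_ne_zero {R M : Type*} [Ring R] [Nontrivial R] [AddCommGroup M]
    [Module R M] {T : Finset M} (hT : LinearIndepOn R id (T : Set M)) (hne : T.Nonempty) :
    ∑ x ∈ T, x ≠ 0 := by
  intro hsum
  obtain ⟨x, hx⟩ := hne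
  simpa using linearIndepOn_finset_iff.mp hT 1 (by simpa using hsum) x hx

theorem hammingNorm_add_hammingNorm_add_hammingNorm_add_le {ι : Type*} [Fintype ι]
    (u w : ι → ZMod 2) :
    hammingNorm u + hammingNorm w + hammingNorm (u + w) ≤ 2 * Fintype.card ι := by
  simp only [hammingNorm, card_filter, Pi.add_apply, ← sum_add_distrib, ← card_univ, mul_comm 2,
    ← smul_eq_mul, ← sum_const]
  have key : ∀ a b : ZMod 2,
      (if a ≠ 0 then 1 else 0) + (if b ≠ 0 then 1 else 0) + (if a + b ≠ 0 then 1 else 0) ≤ 2 := by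
    decide
  exact sum_le_sum fun i _ ↦ key (u i) (w i)

theorem Submodule.exists_ne_zero_three_mul_hammingNorm_le {ι : Type*} [Fintype ι]
    (C : Submodule (ZMod 2) (ι → ZMod 2)) (hC : 1 < finrank (ZMod 2) C) :
    ∃ c ∈ C, c ≠ 0 ∧ 3 * hammingNorm c ≤ 2 * Fintype.card ι := by
  have : Nontrivial C := Module.nontrivial_of_finrank_pos (R := ZMod 2) (by omega)
  obtain ⟨u, hu0⟩ := exists_ne (0 : C)
  obtain ⟨w, huw⟩ := exists_linearIndependent_pair_of_one_lt_finrank hC hu0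
  have hne (s t : ZMod 2) (hst : s ≠ 0 ∨ t ≠ 0) : ((s • u + t • w : C) : ι → ZMod 2) ≠ 0 := by
    intro h
    have := LinearIndependent.pair_iff.mp huw s t (Subtype.ext h)
    tauto
  have := hammingNorm_add_hammingNorm_add_hammingNorm_add_le (u : ι → ZMod 2) w
  by_contra! hbig
  have h1 := hbig _ u.2 (by simpa using hne 1 0 (by simp))
  have h2 := hbig _ w.2 (by simpa using hne 0 1 (by simp))
  have h3 := hbig _ (u + w).2 (by simpa using hne 1 1 (by simp))
  push_cast at h3
  omega

theorem exists_sum_eq_zero_of_finrank_add_two_le {V : Type*} [AddCommGroup V] [Module (ZMod 2) V]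
    (S : Finset V) (hspan : Submodule.span (ZMod 2) (S : Set V) = ⊤)
    (hS : finrank (ZMod 2) V + 2 ≤ #S) :
    ∃ T ⊆ S, T.Nonempty ∧ 3 * #T ≤ 2 * #S ∧ ∑ x ∈ T, x = 0 := by
  classical
  set f := Fintype.linearCombination (ZMod 2) ((↑) : S → V)
  have hrange : LinearMap.range f = ⊤ := by
    rw [Fintype.range_linearCombination, Subtype.range_coe]
    exact hspan
  have hker : 1 < finrank (ZMod 2) (LinearMap.ker f) := by
    have := LinearMap.finrank_range_add_finrank_ker f
    rw [hrange, finrank_top, Module.finrank_fintype_fun_eq_card, Fintype.card_coe] at this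
    omega
  obtain ⟨c, hc, hc0, hwt⟩ := (LinearMap.ker f).exists_ne_zero_three_mul_hammingNorm_le hker
  refine ⟨({i | c i ≠ 0} : Finset S).map (Function.Embedding.subtype _), ?_, ?_, ?_, ?_⟩
  · intro x hx
    obtain ⟨i, -, rfl⟩ := mem_map.mp hx
    exact i.2
  · obtain ⟨i, hi⟩ := Function.ne_iff.mp hc0
    exact ⟨i, mem_map_of_mem _ (by simpa using hi)⟩
  · rwa [card_map, ← hammingNorm, ← Fintype.card_coe]
  · have hc' := LinearMap.mem_ker.mp hc
    rw [Fintype.linearCombination_apply] at hc'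
    rw [sum_map, sum_filter]
    refine (sum_congr rfl fun i _ ↦ ?_).trans hc'
    rcases (by decide : ∀ z : ZMod 2, z = 0 ∨ z = 1) (c i) with h | h <;> simp [h]

section ConicPlaneSystem

variable {V : Type*} [AddCommGroup V] [Module (ZMod 2) V]

/-- `join` is (MM1) and `meet` is (MM2*). -/
structure IsConicPlaneSystem (X : Set V) (Ξ : Set (Submodule (ZMod 2) V)) : Prop where
  conic : ∀ ξ ∈ Ξ, ∃ a b c : V, a ∈ X ∧ b ∈ X ∧ c ∈ X ∧
    X ∩ (ξ : Set V) = {a, b, c} ∧ LinearIndependent (ZMod 2) ![a, b, c]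
  join : ∀ x ∈ X, ∀ y ∈ X, x ≠ y → ∃ ξ ∈ Ξ, x ∈ ξ ∧ y ∈ ξ
  meet : ∀ ξ₁ ∈ Ξ, ∀ ξ₂ ∈ Ξ, ξ₁ ≠ ξ₂ →
    ∃ x ∈ X, ((ξ₁ ⊓ ξ₂ : Submodule (ZMod 2) V) : Set V) = {0, x}

namespace IsConicPlaneSystem

variable {X : Set V} {Ξ : Set (Submodule (ZMod 2) V)} {ξ : Submodule (ZMod 2) V}

theorem ncard_inter_eq_three (h : IsConicPlaneSystem X Ξ) (hξ : ξ ∈ Ξ) :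
    (X ∩ ξ).ncard = 3 := by
  obtain ⟨a, b, c, -, -, -, habc, hli⟩ := h.conic ξ hξ
  have hinj := hli.injective
  rw [habc, Set.ncard_eq_three]
  exact ⟨a, b, c, fun e ↦ by simpa using @hinj 0 1 (by simpa using e),
    fun e ↦ by simpa using @hinj 0 2 (by simpa using e),
    fun e ↦ by simpa using @hinj 1 2 (by simpa using e), rfl⟩

theorem linearIndepOn_inter (h : IsConicPlaneSystem X Ξ) (hξ : ξ ∈ Ξ) :
    LinearIndepOn (ZMod 2) id (X ∩ ξ) := by
  obtain ⟨a, b, c, -, -, -, habc, hli⟩ := h.conic ξ hξ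
  rw [habc]
  exact hli.linearIndepOn_id' (by ext; simp [Matrix.range_cons]; tauto)

theorem add_add_ne_zero (h : IsConicPlaneSystem X Ξ) {x y z : V} (hx : x ∈ X) (hy : y ∈ X)
    (hz : z ∈ X) (hxy : x ≠ y) (hxz : x ≠ z) (hyz : y ≠ z) : x + y + z ≠ 0 := by
  classical
  intro hsum
  obtain ⟨ξ, hξ, hxξ, hyξ⟩ := h.join x hx y hy hxy
  have hzξ : z ∈ ξ := by
    rw [← (eq_neg_of_add_eq_zero_left hsum).trans (ZModModule.neg_eq_self z)]
    exact ξ.add_mem hxξ hyξ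
  refine ((h.linearIndepOn_inter hξ).mono ?_).sum_ne_zero (insert_nonempty x {y, z}) ?_
  · simp [Set.insert_subset_iff, *]
  · simpa [hxy, hxz, hyz, add_assoc] using hsum

theorem add_add_add_ne_zero (h : IsConicPlaneSystem X Ξ) (hX0 : 0 ∉ X) {x y z w : V}
    (hx : x ∈ X) (hy : y ∈ X) (hz : z ∈ X) (hw : w ∈ X) (hxy : x ≠ y) (hxz : x ≠ z)
    (hxw : x ≠ w) (hyz : y ≠ z) (hyw : y ≠ w) (hzw : z ≠ w) : x + y + z + w ≠ 0 := by
  classical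
  intro hsum
  have hxyzw : x + y = z + w := (eq_neg_of_add_eq_zero_left (by rwa [← add_assoc])).trans
    (ZModModule.neg_eq_self _)
  obtain ⟨ξ, hξ, hxξ, hyξ⟩ := h.join x hx y hy hxy
  obtain ⟨ξ', hξ', hzξ', hwξ'⟩ := h.join z hz w hw hzw
  by_cases hξξ' : ξ = ξ'
  · subst hξξ'
    refine ((h.linearIndepOn_inter hξ).mono ?_).sum_ne_zero (insert_nonempty x {y, z, w}) ?_
    · simp [Set.insert_subset_iff, *]
    · simpa [hxy, hxz, hxw, hyz, hyw, hzw, add_assoc] using hsum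
  obtain ⟨t, ht, hinf⟩ := h.meet ξ hξ ξ' hξ' hξξ'
  have hxyt : x + y ∈ ({0, t} : Set V) :=
    hinf ▸ ⟨ξ.add_mem hxξ hyξ, hxyzw ▸ ξ'.add_mem hzξ' hwξ'⟩
  rcases hxyt with h0 | rfl
  · exact hxy ((eq_neg_of_add_eq_zero_left h0).trans (ZModModule.neg_eq_self y))
  · refine h.add_add_ne_zero hx hy ht hxy (fun e ↦ hX0 ?_) (fun e ↦ hX0 ?_) (ZModModule.add_self _)
    · rwa [← (by simpa using e : y = 0)]
    · rwa [← (by simpa using e : x = 0)]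

theorem ncard_eq_seven [Finite V] (h : IsConicPlaneSystem X Ξ) (hX0 : 0 ∉ X)
    (hΞ : Ξ.Nontrivial) : X.ncard = 7 := by
  let : Membership X Ξ := ⟨fun ξ x ↦ (x : V) ∈ (ξ : Submodule (ZMod 2) V)⟩
  have : Nontrivial Ξ := Set.nontrivial_coe_sort.mpr hΞ
  have := Fintype.ofFinite X
  rw [← Nat.card_coe_set_eq, Nat.card_eq_fintype_card]
  refine Configuration.card_points_eq_seven_of_pointCount_eq_three (L := Ξ) ?_ ?_ ?_
  · rintro ⟨x, hx⟩ ⟨y, hy⟩ hxy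
    obtain ⟨ξ, hξ, hxξ, hyξ⟩ := h.join x hx y hy (Subtype.coe_ne_coe.mpr hxy)
    exact ⟨⟨ξ, hξ⟩, hxξ, hyξ⟩
  · rintro ⟨ξ₁, h₁⟩ ⟨ξ₂, h₂⟩ hne
    obtain ⟨x, hx, hinf⟩ := h.meet ξ₁ h₁ ξ₂ h₂ (Subtype.coe_ne_coe.mpr hne)
    have hmem (y : V) : y ∈ ξ₁ ∧ y ∈ ξ₂ ↔ y = 0 ∨ y = x := by
      rw [← Submodule.mem_inf, ← SetLike.mem_coe, hinf]
      rfl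
    refine ⟨⟨x, hx⟩, (hmem x).mpr (.inr rfl), fun ⟨y, hy⟩ hy' ↦ Subtype.ext ?_⟩
    exact ((hmem y).mp hy').resolve_left (ne_of_mem_of_not_mem hy hX0)
  · rintro ⟨ξ, hξ⟩
    change Nat.card {x : X // (x : V) ∈ ξ} = 3
    rw [Nat.card_congr (Equiv.subtypeSubtypeEquivSubtypeInter (· ∈ X) (· ∈ ξ))]
    exact (Nat.card_coe_set_eq (X ∩ ξ)).trans (h.ncard_inter_eq_three hξ)

theorem sum_ne_zero_of_card_le_four (h : IsConicPlaneSystem X Ξ) (hX0 : 0 ∉ X) {S : Finset V}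
    (hSX : ↑S ⊆ X) (hS : S.Nonempty) (hS4 : #S ≤ 4) : ∑ x ∈ S, x ≠ 0 := by
  classical
  obtain h1 | h2 | h3 | h4 : #S = 1 ∨ #S = 2 ∨ #S = 3 ∨ #S = 4 := by
    have := hS.card_pos
    omega
  · obtain ⟨x, rfl⟩ := card_eq_one.mp h1
    simp only [coe_singleton, Set.singleton_subset_iff, sum_singleton] at hSX ⊢
    exact ne_of_mem_of_not_mem hSX hX0
  · obtain ⟨x, y, hxy, rfl⟩ := card_eq_two.mp h2
    rw [sum_pair hxy, ← ZModModule.sub_eq_add, sub_ne_zero]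
    exact hxy
  · obtain ⟨x, y, z, hxy, hxz, hyz, rfl⟩ := card_eq_three.mp h3
    simp only [coe_insert, coe_singleton, Set.insert_subset_iff, Set.singleton_subset_iff] at hSX
    simpa [hxy, hxz, hyz, add_assoc] using h.add_add_ne_zero hSX.1 hSX.2.1 hSX.2.2 hxy hxz hyz
  · obtain ⟨x, y, z, w, hxy, hxz, hxw, hyz, hyw, hzw, rfl⟩ := card_eq_four.mp h4
    simp only [coe_insert, coe_singleton, Set.insert_subset_iff, Set.singleton_subset_iff] at hSX
    simpa [hxy, hxz, hxw, hyz, hyw, hzw, add_assoc] using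
      h.add_add_add_ne_zero hX0 hSX.1 hSX.2.1 hSX.2.2.1 hSX.2.2.2 hxy hxz hxw hyz hyw hzw

end IsConicPlaneSystem

end ConicPlaneSystem

theorem fano_veronese_card_and_dim_general
    (N : ℕ)
    (V : Type*) [AddCommGroup V] [Module (ZMod 2) V]
    (hdim : Module.finrank (ZMod 2) V = N + 1)
    (X : Set V) (hX0 : (0 : V) ∉ X)
    (hspan : Submodule.span (ZMod 2) X = ⊤)
    (Ξ : Set (Submodule (ZMod 2) V)) (hΞ : Ξ.Nontrivial)
    (hconic : ∀ ξ ∈ Ξ, ∃ a b c : V, a ∈ X ∧ b ∈ X ∧ c ∈ X ∧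
        X ∩ (ξ : Set V) = {a, b, c} ∧ LinearIndependent (ZMod 2) ![a, b, c])
    (hMM1 : ∀ x ∈ X, ∀ y ∈ X, x ≠ y → ∃ ξ ∈ Ξ, x ∈ ξ ∧ y ∈ ξ)
    (hMM2 : ∀ ξ₁ ∈ Ξ, ∀ ξ₂ ∈ Ξ, ξ₁ ≠ ξ₂ →
        ∃ x ∈ X, ((ξ₁ ⊓ ξ₂ : Submodule (ZMod 2) V) : Set V) = {0, x}) :
    X.ncard = 7 ∧ N ≤ 6 ∧ N ≠ 4 := by
  have hX : IsConicPlaneSystem X Ξ := ⟨hconic, hMM1, hMM2⟩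
  have : Module.Finite (ZMod 2) V := Module.finite_of_finrank_pos (by omega)
  have : Finite V := Module.finite_of_finite (ZMod 2)
  have h7 := hX.ncard_eq_seven hX0 hΞ
  obtain ⟨S, rfl⟩ := (Set.toFinite X).exists_finset_coe
  rw [Set.ncard_coe_finset] at h7
  have hle : finrank (ZMod 2) V ≤ 7 := by
    have := finrank_span_finset_le_card (R := ZMod 2) S
    rwa [Set.finrank, hspan, finrank_top, h7] at this
  have hge : 6 ≤ finrank (ZMod 2) V := by
    by_contra! hlt
    obtain ⟨T, hTS, hT, hT4, hTsum⟩ := exists_sum_eq_zero_of_finrank_add_two_le S hspan (by omega)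
    exact hX.sum_ne_zero_of_card_le_four hX0 (by exact_mod_cast hTS) hT (by omega) hTsum
  exact ⟨by rwa [Set.ncard_coe_finset], by omega, by omega⟩

/-- Let `X` span `PG(N, 2)` (`N > 2`), modelled as the nonzero vectors of an
`(N+1)`-dimensional `F₂`-vector space, with a family `Ξ` of planes (3-dimensional linear
subspaces) each meeting `X` in a conic (3 linearly independent points), satisfying (MM1)
(any two points of `X` lie in a member of `Ξ`) and (MM2*) (any two distinct members of
`Ξ` meet in exactly one point of `X`). Then `|X| = 7`, `N ≤ 6`, and `N ≠ 4`. -/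
theorem fano_veronese_card_and_dim
    (N : ℕ) (hN : 2 < N)
    (V : Type*) [AddCommGroup V] [Module (ZMod 2) V]
    (hdim : Module.finrank (ZMod 2) V = N + 1)
    (X : Set V) (hX0 : (0 : V) ∉ X)
    (hspan : Submodule.span (ZMod 2) X = ⊤)
    (Ξ : Set (Submodule (ZMod 2) V)) (hΞ : Ξ.Nontrivial)
    (hplane : ∀ ξ ∈ Ξ, Module.finrank (ZMod 2) ξ = 3)
    (hconic : ∀ ξ ∈ Ξ, ∃ a b c : V, a ∈ X ∧ b ∈ X ∧ c ∈ X ∧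
        X ∩ (ξ : Set V) = {a, b, c} ∧ LinearIndependent (ZMod 2) ![a, b, c])
    (hMM1 : ∀ x ∈ X, ∀ y ∈ X, x ≠ y → ∃ ξ ∈ Ξ, x ∈ ξ ∧ y ∈ ξ)
    (hMM2 : ∀ ξ₁ ∈ Ξ, ∀ ξ₂ ∈ Ξ, ξ₁ ≠ ξ₂ →
        ∃ x ∈ X, ((ξ₁ ⊓ ξ₂ : Submodule (ZMod 2) V) : Set V) = {0, x}) :
    X.ncard = 7 ∧ N ≤ 6 ∧ N ≠ 4 :=
  fano_veronese_card_and_dim_general N V hdim X hX0 hspan Ξ hΞ hconic hMM1 hMM2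
end

section
/- In the configuration M¹⁰(F₂) (21 points of PG(10,2) realizing PG(2,4) with blocks as frames of 3-spaces), if a point p of PG(10,2) is the center (sum) of an X-triangle (three points of X no three of which lie in a common block), then p is not the center of any other X-triangle, nor the center of any X-quadrangle (four points of X, no three in a common block). -/
/-- An `X`-triangle: three points of `X` not all contained in a common block. -/
def IsXTriangle {V : Type*} (X : Finset V) (Bl : Set (Finset V)) (T : Finset V) : Prop :=
  T ⊆ X ∧ T.card = 3 ∧ ¬ ∃ b ∈ Bl, T ⊆ b

/-- An `X`-quadrangle: four points of `X`, no three of which lie in a common block. -/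
def IsXQuadrangle {V : Type*} (X : Finset V) (Bl : Set (Finset V)) (Q : Finset V) : Prop :=
  Q ⊆ X ∧ Q.card = 4 ∧ ∀ s ⊆ Q, s.card = 3 → ¬ ∃ b ∈ Bl, s ⊆ b

/-- In the configuration `M¹⁰(F₂)` (21 points, no 3 collinear, no 4 coplanar, with the
zero-sum lemma available), if a point `p` is the center (sum) of an `X`-triangle, then
`p` is not the center of any other `X`-triangle, nor of any `X`-quadrangle. -/
theorem triangle_center_unique
    (V : Type*) [AddCommGroup V] [Module (ZMod 2) V] [DecidableEq V]
    (X : Finset V) (hX0 : (0 : V) ∉ X) (hcard : X.card = 21)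
    (Bl : Set (Finset V))
    (hBl : ∀ b ∈ Bl, b ⊆ X ∧ b.card = 5 ∧ (∑ v ∈ b, v) = 0)
    (hpair : ∀ x ∈ X, ∀ y ∈ X, x ≠ y → ∃! b, b ∈ Bl ∧ x ∈ b ∧ y ∈ b)
    (hno3 : ∀ x ∈ X, ∀ y ∈ X, x ≠ y → x + y ∉ X)
    (hno4 : ∀ s : Finset V, s ⊆ X → s.card = 4 →
        LinearIndependent (ZMod 2) (fun x : (s : Set V) => (x : V)))
    (hzerosum : ∀ S : Finset V, S ⊆ X → 1 ≤ S.card → S.card ≤ 8 →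
        (∑ v ∈ S, v) = 0 →
        (∃ b ∈ Bl, S = b) ∨ ∃ b₁ ∈ Bl, ∃ b₂ ∈ Bl, b₁ ≠ b₂ ∧ S = symmDiff b₁ b₂) :
    (∀ T₁ T₂ : Finset V, IsXTriangle X Bl T₁ → IsXTriangle X Bl T₂ →
        (∑ v ∈ T₁, v) = (∑ v ∈ T₂, v) → T₁ = T₂) ∧
    (∀ T Q : Finset V, IsXTriangle X Bl T → IsXQuadrangle X Bl Q →
        (∑ v ∈ T, v) ≠ (∑ v ∈ Q, v)) := by
  have h2 : ∀ v : V, v + v = 0 := by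
    intro v
    have h := two_smul (ZMod 2) v
    rwa [show (2 : ZMod 2) = 0 by decide, zero_smul, eq_comm] at h
  -- sum over symmetric difference
  have hsumsd : ∀ s t : Finset V,
      (∑ v ∈ symmDiff s t, v) = (∑ v ∈ s, v) + (∑ v ∈ t, v) := by
    intro s t
    have h1 : (∑ v ∈ s ∪ t, v) + (∑ v ∈ s ∩ t, v) = (∑ v ∈ s, v) + (∑ v ∈ t, v) :=
      Finset.sum_union_inter
    have h3 : (∑ v ∈ (s ∪ t) \ (s ∩ t), v) + (∑ v ∈ s ∩ t, v) = ∑ v ∈ s ∪ t, v :=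
      Finset.sum_sdiff Finset.inter_subset_union
    have hsd : symmDiff s t = (s ∪ t) \ (s ∩ t) := by
      ext a
      simp only [Finset.mem_symmDiff, Finset.mem_sdiff, Finset.mem_union, Finset.mem_inter]
      tauto
    have hz : (∑ v ∈ s ∩ t, v) + (∑ v ∈ s ∩ t, v) = 0 := by
      rw [← Finset.sum_add_distrib]
      exact Finset.sum_eq_zero fun x _ => h2 x
    rw [hsd, ← h1, eq_comm, ← h3]
    rw [add_assoc, hz, add_zero]
  -- card of symmetric difference
  have hcardsd : ∀ s t : Finset V,
      (symmDiff s t).card + 2 * (s ∩ t).card = s.card + t.card := by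
    intro s t
    have hd : Disjoint (s \ t) (t \ s) := disjoint_sdiff_sdiff
    have hsd : symmDiff s t = (s \ t) ∪ (t \ s) := by
      ext a
      simp only [Finset.mem_symmDiff, Finset.mem_sdiff, Finset.mem_union]
    have h1 : (symmDiff s t).card = (s \ t).card + (t \ s).card := by
      rw [hsd, Finset.card_union_of_disjoint hd]
    have h2' := Finset.card_sdiff_add_card_inter s t
    have h3' := Finset.card_sdiff_add_card_inter t s
    rw [Finset.inter_comm t s] at h3'
    omega
  -- two distinct blocks meet in at most one point
  have hbint : ∀ b₁ ∈ Bl, ∀ b₂ ∈ Bl, b₁ ≠ b₂ → (b₁ ∩ b₂).card ≤ 1 := by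
    intro b₁ hb₁ b₂ hb₂ hne
    by_contra h
    push_neg at h
    obtain ⟨x, hx, y, hy, hxy⟩ := Finset.one_lt_card.mp h
    obtain ⟨hx1, hx2⟩ := Finset.mem_inter.mp hx
    obtain ⟨hy1, hy2⟩ := Finset.mem_inter.mp hy
    obtain ⟨b, -, hun⟩ := hpair x ((hBl b₁ hb₁).1 hx1) y ((hBl b₁ hb₁).1 hy1) hxy
    exact hne ((hun b₁ ⟨hb₁, hx1, hy1⟩).trans (hun b₂ ⟨hb₂, hx2, hy2⟩).symm)
  -- a symmDiff of two distinct blocks has card ≥ 8 and even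
  have hsdb : ∀ b₁ ∈ Bl, ∀ b₂ ∈ Bl, b₁ ≠ b₂ →
      8 ≤ (symmDiff b₁ b₂).card ∧ (symmDiff b₁ b₂).card % 2 = 0 := by
    intro b₁ hb₁ b₂ hb₂ hne
    have h1 := hcardsd b₁ b₂
    have h2' := hbint b₁ hb₁ b₂ hb₂ hne
    rw [(hBl b₁ hb₁).2.1, (hBl b₂ hb₂).2.1] at h1
    omega
  constructor
  · intro T₁ T₂ hT₁ hT₂ hsum
    by_contra hne
    set S := symmDiff T₁ T₂ with hS
    have hSX : S ⊆ X := by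
      intro v hv
      rw [hS, Finset.mem_symmDiff] at hv
      rcases hv with ⟨h, -⟩ | ⟨h, -⟩
      · exact hT₁.1 h
      · exact hT₂.1 h
    have hcS := hcardsd T₁ T₂
    rw [hT₁.2.1, hT₂.2.1, ← hS] at hcS
    have hSne : S ≠ ∅ := fun h => hne (symmDiff_eq_bot.mp (by rw [← Finset.bot_eq_empty] at h; exact h))
    have hS1 : 1 ≤ S.card := Finset.card_pos.mpr (Finset.nonempty_of_ne_empty hSne)
    have hSz : (∑ v ∈ S, v) = 0 := by
      rw [hS, hsumsd, hsum, ← Finset.sum_add_distrib]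
      exact Finset.sum_eq_zero fun x _ => h2 x
    rcases hzerosum S hSX hS1 (by omega) hSz with ⟨b, hb, hSb⟩ | ⟨b₁, hb₁, b₂, hb₂, hbne, hSb⟩
    · have := (hBl b hb).2.1
      rw [← hSb] at this
      omega
    · have := hsdb b₁ hb₁ b₂ hb₂ hbne
      rw [← hSb] at this
      omega
  · intro T Q hT hQ hsum
    set S := symmDiff T Q with hS
    have hSX : S ⊆ X := by
      intro v hv
      rw [hS, Finset.mem_symmDiff] at hv
      rcases hv with ⟨h, -⟩ | ⟨h, -⟩
      · exact hT.1 h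
      · exact hQ.1 h
    have hcS := hcardsd T Q
    rw [hT.2.1, hQ.2.1, ← hS] at hcS
    have hSz : (∑ v ∈ S, v) = 0 := by
      rw [hS, hsumsd, hsum, ← Finset.sum_add_distrib]
      exact Finset.sum_eq_zero fun x _ => h2 x
    rcases hzerosum S hSX (by omega) (by omega) hSz with ⟨b, hb, hSb⟩ | ⟨b₁, hb₁, b₂, hb₂, hbne, hSb⟩
    · -- S is a block, so |T ∩ Q| = 1 and Q \ T ⊆ b has 3 elements
      have hb5 : S.card = 5 := by rw [hSb]; exact (hBl b hb).2.1
      have hQT : (Q \ T).card = 3 := by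
        have := Finset.card_sdiff_add_card_inter Q T
        rw [Finset.inter_comm Q T] at this
        rw [hQ.2.1] at this
        omega
      have hsub : Q \ T ⊆ b := by
        rw [← hSb, hS, symmDiff_comm]
        intro v hv
        obtain ⟨h1, h2'⟩ := Finset.mem_sdiff.mp hv
        exact Finset.mem_symmDiff.mpr (Or.inl ⟨h1, h2'⟩)
      exact hQ.2.2 (Q \ T) (Finset.sdiff_subset) hQT ⟨b, hb, hsub⟩
    · have := hsdb b₁ hb₁ b₂ hb₂ hbne
      rw [← hSb] at this
      omega
end

section
/- In the configuration M¹⁰(F₂), if a point p is the center (sum) of an X-quadrangle {a,b,c,d}, then p is the center of exactly three other X-quadrangles, obtained by pairing {a,b,c,d} into two pairs, taking the two blocks through the pairs, and replacing a,b,c,d by the remaining points of those two blocks other than their intersection point. -/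
/-!
If `Q'` is another quadrangle with the same center, then `Q ∆ Q'` is a zero-sum set of even
size at most 8, hence by the zero-sum lemma the symmetric difference `b₁ ∆ b₂` of two blocks.
Two blocks share at most one point, so `b₁ ∆ b₂` has at least 8 points; thus `Q` and `Q'` are
disjoint and `Q ∪ Q' = b₁ ∆ b₂`, with each `bᵢ` meeting `Q` in two points. Conversely, the two
blocks through the pairs of a pairing of `Q` give such a set `b₁ ∆ b₂ ⊇ Q`, and since blocks of
the plane meet, `b₁ ∆ b₂ \ Q` is a quadrangle with the same center. For a fixed `a ∈ Q` these
quadrangles correspond bijectively to the partner of `a` in the pairing, whence exactly three.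
-/

open Finset
open scoped symmDiff

theorem Finset.card_symmDiff_add_two_mul_card_inter {α : Type*} [DecidableEq α]
    (s t : Finset α) : #(s ∆ t) + 2 * #(s ∩ t) = #s + #t := by
  have := card_union_add_card_inter s t
  have := card_le_card (inter_subset_union : s ∩ t ⊆ s ∪ t)
  rw [symmDiff_eq_sup_sdiff_inf, sup_eq_union, inf_eq_inter,
    card_sdiff_of_subset inter_subset_union]
  omega

theorem Finset.inter_symmDiff_eq_sdiff {α : Type*} [DecidableEq α] (s t : Finset α) :
    s ∩ (s ∆ t) = s \ t := by
  ext v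
  simp only [mem_inter, mem_symmDiff, mem_sdiff]
  tauto

theorem Finset.inter_eq_sdiff_of_subset_symmDiff {α : Type*} [DecidableEq α]
    {s t u : Finset α} (h : u ⊆ s ∆ t) : t ∩ u = u \ s := by
  ext v
  have := @h v
  simp only [mem_inter, mem_sdiff, mem_symmDiff] at this ⊢
  tauto

theorem ZModModule.sum_symmDiff {ι G : Type*} [DecidableEq ι] [AddCommGroup G]
    [Module (ZMod 2) G] (s t : Finset ι) (f : ι → G) :
    ∑ i ∈ s ∆ t, f i = ∑ i ∈ s, f i + ∑ i ∈ t, f i := by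
  rw [← sum_union_inter, symmDiff_eq_sup_sdiff_inf, sup_eq_union, inf_eq_inter,
    ← sum_sdiff (inter_subset_union : s ∩ t ⊆ s ∪ t), add_assoc, ZModModule.add_self, add_zero]

theorem ZModModule.sum_sdiff_of_subset {ι G : Type*} [DecidableEq ι] [AddCommGroup G]
    [Module (ZMod 2) G] {s t : Finset ι} (h : s ⊆ t) (f : ι → G) :
    ∑ i ∈ t \ s, f i = ∑ i ∈ t, f i + ∑ i ∈ s, f i := by
  rw [← symmDiff_of_ge h, ZModModule.sum_symmDiff]

structure IsLinearSpace {V : Type*} (X : Finset V) (Bl : Set (Finset V)) (k : ℕ) : Prop where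
  subset_of_mem : ∀ b ∈ Bl, b ⊆ X
  card_of_mem : ∀ b ∈ Bl, #b = k
  existsUnique_block : ∀ x ∈ X, ∀ y ∈ X, x ≠ y → ∃! b, b ∈ Bl ∧ x ∈ b ∧ y ∈ b

/-- Degenerate planes are allowed: no four points in general position are required. -/
structure IsProjectivePlane {V : Type*} [DecidableEq V] (X : Finset V) (Bl : Set (Finset V))
    (k : ℕ) : Prop extends IsLinearSpace X Bl k where
  card_inter_of_ne : ∀ b ∈ Bl, ∀ c ∈ Bl, b ≠ c → #(b ∩ c) = 1

namespace IsLinearSpace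

variable {V : Type*} {X : Finset V} {Bl : Set (Finset V)} {k : ℕ} {b c : Finset V}

theorem eq_of_mem_of_mem (hL : IsLinearSpace X Bl k) (hb : b ∈ Bl) (hc : c ∈ Bl) {x y : V}
    (hxy : x ≠ y) (hxb : x ∈ b) (hyb : y ∈ b) (hxc : x ∈ c) (hyc : y ∈ c) : b = c :=
  (hL.existsUnique_block x (hL.subset_of_mem b hb hxb) y (hL.subset_of_mem b hb hyb) hxy).unique
    ⟨hb, hxb, hyb⟩ ⟨hc, hxc, hyc⟩

variable [DecidableEq V]

theorem eq_of_one_lt_card_inter (hL : IsLinearSpace X Bl k) (hb : b ∈ Bl) (hc : c ∈ Bl)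
    (h : 1 < #(b ∩ c)) : b = c := by
  obtain ⟨x, hx, y, hy, hxy⟩ := one_lt_card.1 h
  rw [mem_inter] at hx hy
  exact hL.eq_of_mem_of_mem hb hc hxy hx.1 hy.1 hx.2 hy.2

theorem card_inter_le_one (hL : IsLinearSpace X Bl k) (hb : b ∈ Bl) (hc : c ∈ Bl)
    (hne : b ≠ c) : #(b ∩ c) ≤ 1 :=
  not_lt.1 fun h => hne (hL.eq_of_one_lt_card_inter hb hc h)

theorem eq_or_eq_of_two_lt_card_inter_symmDiff (hL : IsLinearSpace X Bl k) {b₁ b₂ : Finset V}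
    (hb₁ : b₁ ∈ Bl) (hb₂ : b₂ ∈ Bl) (hc : c ∈ Bl) (h : 2 < #(c ∩ (b₁ ∆ b₂))) :
    c = b₁ ∨ c = b₂ := by
  have hsub : c ∩ (b₁ ∆ b₂) ⊆ c ∩ b₁ ∪ c ∩ b₂ := by
    rw [← inter_union_distrib_left]
    exact inter_subset_inter_left symmDiff_subset_union
  have := (card_le_card hsub).trans (card_union_le _ _)
  by_contra! hne
  have := hL.card_inter_le_one hc hb₁ hne.1
  have := hL.card_inter_le_one hc hb₂ hne.2
  omega

/-- The blocks through `x` cover `X \ {x}` disjointly. -/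
theorem card_mul_le_card_sub_one (hL : IsLinearSpace X Bl k) {x : V} (hx : x ∈ X) {F : Finset (Finset V)}
    (hF : ∀ b ∈ F, b ∈ Bl ∧ x ∈ b) : #F * (k - 1) ≤ #X - 1 := by
  have hdisj : (F : Set (Finset V)).PairwiseDisjoint (·.erase x) := by
    intro b hb c hc hbc
    refine disjoint_left.2 fun y hyb hyc => hbc ?_
    exact hL.eq_of_mem_of_mem (hF b hb).1 (hF c hc).1 (ne_of_mem_erase hyb).symm (hF b hb).2
      (mem_of_mem_erase hyb) (hF c hc).2 (mem_of_mem_erase hyc)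
  calc #F * (k - 1) = #(F.biUnion (·.erase x)) := by
        rw [card_biUnion hdisj, sum_const_nat fun b hb => by
          rw [card_erase_of_mem (hF b hb).2, hL.card_of_mem b (hF b hb).1]]
    _ ≤ #(X.erase x) := card_le_card <| biUnion_subset.2 fun b hb =>
        erase_subset_erase x (hL.subset_of_mem b (hF b hb).1)
    _ = #X - 1 := card_erase_of_mem hx

/-- A point `x` of `c` off a block `b` disjoint from `c` would lie on `k + 1` blocks: `c` and
the blocks joining it to the points of `b`. -/
theorem inter_nonempty (hL : IsLinearSpace X Bl k) (hX : #X < k * k) (hb : b ∈ Bl)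
    (hc : c ∈ Bl) : (b ∩ c).Nonempty := by
  by_contra hbc
  rw [not_nonempty_iff_eq_empty, ← disjoint_iff_inter_eq_empty] at hbc
  obtain ⟨x, hxc⟩ : c.Nonempty := by
    rw [← card_pos, hL.card_of_mem c hc]
    exact Nat.pos_of_ne_zero (by rintro rfl; simp at hX)
  have hxb : x ∉ b := disjoint_right.1 hbc hxc
  have hxX := hL.subset_of_mem c hc hxc
  choose! f hf using fun y (hy : y ∈ b) => (hL.existsUnique_block x hxX y
    (hL.subset_of_mem b hb hy) fun h => hxb (h ▸ hy)).exists
  have hinj : Set.InjOn f b := fun y hy y' hy' hyy' => by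
    by_contra hne
    have := hL.eq_of_mem_of_mem (hf y hy).1 hb hne (hf y hy).2.2 (hyy' ▸ (hf y' hy').2.2) hy hy'
    exact hxb (this ▸ (hf y hy).2.1)
  have hc_notMem : c ∉ b.image f := by
    simp only [mem_image, not_exists, not_and]
    exact fun y hy hfy => disjoint_left.1 hbc hy (hfy ▸ (hf y hy).2.2)
  have := hL.card_mul_le_card_sub_one hxX (F := insert c (b.image f)) <| by
    simp only [forall_mem_insert, forall_mem_image]
    exact ⟨⟨hc, hxc⟩, fun y hy => ⟨(hf y hy).1, (hf y hy).2.1⟩⟩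
  rw [card_insert_of_notMem hc_notMem, card_image_of_injOn hinj, hL.card_of_mem b hb] at this
  have hX1 : 1 ≤ #X := card_pos.2 ⟨x, hxX⟩
  obtain _ | k := k
  · simp at hX
  · rw [add_tsub_cancel_right, Nat.le_sub_iff_add_le hX1] at this
    nlinarith

theorem isProjectivePlane (hL : IsLinearSpace X Bl k) (hX : #X < k * k) :
    IsProjectivePlane X Bl k where
  toIsLinearSpace := hL
  card_inter_of_ne _ hb _ hc hne :=
    le_antisymm (hL.card_inter_le_one hb hc hne) (card_pos.2 (hL.inter_nonempty hX hb hc))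

end IsLinearSpace

namespace IsProjectivePlane

variable {V : Type*} [DecidableEq V] {X : Finset V} {Bl : Set (Finset V)} {k : ℕ}
  {b₁ b₂ c₁ c₂ : Finset V}

theorem card_inter_symmDiff (hP : IsProjectivePlane X Bl k) (hb₁ : b₁ ∈ Bl) (hb₂ : b₂ ∈ Bl)
    (hne : b₁ ≠ b₂) : #(b₁ ∩ (b₁ ∆ b₂)) = k - 1 := by
  have := card_sdiff_add_card_inter b₁ b₂
  rw [hP.card_inter_of_ne b₁ hb₁ b₂ hb₂ hne, hP.card_of_mem b₁ hb₁] at this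
  rw [inter_symmDiff_eq_sdiff]
  omega

theorem eq_or_eq_of_symmDiff_eq (hP : IsProjectivePlane X Bl k) (hk : 3 < k) (hb₁ : b₁ ∈ Bl)
    (hb₂ : b₂ ∈ Bl) (hc₁ : c₁ ∈ Bl) (hc₂ : c₂ ∈ Bl) (hne : c₁ ≠ c₂)
    (h : c₁ ∆ c₂ = b₁ ∆ b₂) : c₁ = b₁ ∨ c₁ = b₂ := by
  refine hP.eq_or_eq_of_two_lt_card_inter_symmDiff hb₁ hb₂ hc₁ ?_
  rw [← h, hP.card_inter_symmDiff hc₁ hc₂ hne]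
  omega

end IsProjectivePlane

section Quadrangle

variable {V : Type*} [DecidableEq V] {X : Finset V} {Bl : Set (Finset V)} {Q : Finset V}
  {b₁ b₂ c₁ c₂ : Finset V}

theorem isXQuadrangle_iff :
    IsXQuadrangle X Bl Q ↔ Q ⊆ X ∧ #Q = 4 ∧ ∀ b ∈ Bl, #(b ∩ Q) ≤ 2 := by
  refine and_congr_right fun _ => and_congr_right fun _ =>
    ⟨fun h b hb => ?_, fun h s hs hs3 ⟨b, hb, hsb⟩ => ?_⟩
  · by_contra! h3
    obtain ⟨s, hs, hs3⟩ := exists_subset_card_eq h3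
    exact h s (hs.trans inter_subset_right) hs3 ⟨b, hb, hs.trans inter_subset_left⟩
  · have := card_le_card (subset_inter hsb hs)
    have := h b hb
    omega

namespace IsXQuadrangle

theorem card_inter_le_two (hQ : IsXQuadrangle X Bl Q) {b : Finset V} (hb : b ∈ Bl) :
    #(b ∩ Q) ≤ 2 :=
  (isXQuadrangle_iff.1 hQ).2.2 b hb

theorem notMem_of_mem (hQ : IsXQuadrangle X Bl Q) {b : Finset V} (hb : b ∈ Bl) {x y z : V}
    (hx : x ∈ Q) (hy : y ∈ Q) (hz : z ∈ Q) (hxy : x ≠ y) (hxz : x ≠ z) (hyz : y ≠ z)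
    (hxb : x ∈ b) (hyb : y ∈ b) : z ∉ b := fun hzb => by
  have := card_le_card (show {x, y, z} ⊆ b ∩ Q by simp [insert_subset_iff, *])
  rw [card_eq_three.2 ⟨x, y, z, hxy, hxz, hyz, rfl⟩] at this
  have := hQ.card_inter_le_two hb
  omega

theorem ne_of_subset_symmDiff (hQ : IsXQuadrangle X Bl Q) (h : Q ⊆ b₁ ∆ b₂) : b₁ ≠ b₂ := by
  rintro rfl
  rw [symmDiff_self, bot_eq_empty, subset_empty] at h
  simpa [h] using hQ.2.1

theorem card_inter_eq_two_of_subset_symmDiff (hQ : IsXQuadrangle X Bl Q) (hb₁ : b₁ ∈ Bl)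
    (hb₂ : b₂ ∈ Bl) (h : Q ⊆ b₁ ∆ b₂) : #(b₁ ∩ Q) = 2 := by
  have hcover : Q ⊆ b₁ ∩ Q ∪ b₂ ∩ Q := fun v hv => by
    rcases mem_symmDiff.1 (h hv) with ⟨hv₁, -⟩ | ⟨hv₂, -⟩ <;> simp [*]
  have := (card_le_card hcover).trans (card_union_le _ _)
  have := hQ.card_inter_le_two hb₁
  have := hQ.card_inter_le_two hb₂
  have := hQ.2.1
  omega

variable {k : ℕ}

theorem exists_subset_symmDiff_of_mem (hQ : IsXQuadrangle X Bl Q) (hL : IsLinearSpace X Bl k)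
    {a t : V} (ha : a ∈ Q) (ht : t ∈ Q) (hat : a ≠ t) :
    ∃ b₁ ∈ Bl, ∃ b₂ ∈ Bl, a ∈ b₁ ∧ t ∈ b₁ ∧ Q ⊆ b₁ ∆ b₂ := by
  obtain ⟨r, s, hrs, hrest⟩ := card_eq_two.1 <| show #((Q.erase a).erase t) = 2 by
    rw [card_erase_of_mem (mem_erase.2 ⟨hat.symm, ht⟩), card_erase_of_mem ha, hQ.2.1]
  have hr : r ∈ (Q.erase a).erase t := by simp [hrest]
  have hs : s ∈ (Q.erase a).erase t := by simp [hrest]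
  simp only [mem_erase] at hr hs
  obtain ⟨b₁, hb₁, hab₁, htb₁⟩ := (hL.existsUnique_block a (hQ.1 ha) t (hQ.1 ht) hat).exists
  obtain ⟨b₂, hb₂, hrb₂, hsb₂⟩ :=
    (hL.existsUnique_block r (hQ.1 hr.2.2) s (hQ.1 hs.2.2) hrs).exists
  refine ⟨b₁, hb₁, b₂, hb₂, hab₁, htb₁, fun v hv => mem_symmDiff.2 ?_⟩
  have hv : v = a ∨ v = t ∨ v = r ∨ v = s := by
    by_cases hva : v = a; · exact .inl hva
    by_cases hvt : v = t; · exact .inr (.inl hvt)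
    have : v ∈ (Q.erase a).erase t := mem_erase.2 ⟨hvt, mem_erase.2 ⟨hva, hv⟩⟩
    rw [hrest, mem_insert, mem_singleton] at this
    exact .inr (.inr this)
  rcases hv with rfl | rfl | rfl | rfl
  · exact .inl ⟨hab₁, hQ.notMem_of_mem hb₂ hr.2.2 hs.2.2 ha hrs hr.2.1 hs.2.1 hrb₂ hsb₂⟩
  · exact .inl ⟨htb₁, hQ.notMem_of_mem hb₂ hr.2.2 hs.2.2 ht hrs hr.1 hs.1 hrb₂ hsb₂⟩
  · exact .inr ⟨hrb₂, hQ.notMem_of_mem hb₁ ha ht hr.2.2 hat hr.2.1.symm hr.1.symm hab₁ htb₁⟩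
  · exact .inr ⟨hsb₂, hQ.notMem_of_mem hb₁ ha ht hs.2.2 hat hs.2.1.symm hs.1.symm hab₁ htb₁⟩

theorem exists_pairing_of_subset_symmDiff (hQ : IsXQuadrangle X Bl Q) (hb₁ : b₁ ∈ Bl)
    (hb₂ : b₂ ∈ Bl) (h : Q ⊆ b₁ ∆ b₂) {a : V} (ha : a ∈ Q) :
    ∃ c₁ ∈ Bl, ∃ c₂ ∈ Bl, c₁ ∆ c₂ = b₁ ∆ b₂ ∧ ∃ t ∈ Q.erase a, a ∈ c₁ ∧ t ∈ c₁ := by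
  wlog hab : a ∈ b₁ generalizing b₁ b₂
  · obtain ⟨c₁, hc₁, c₂, hc₂, hc, hpair⟩ :=
      this hb₂ hb₁ (symmDiff_comm b₁ b₂ ▸ h) ((mem_symmDiff.1 (h ha)).resolve_left (by tauto)).1
    exact ⟨c₁, hc₁, c₂, hc₂, hc.trans (symmDiff_comm _ _), hpair⟩
  obtain ⟨t, ht, hta⟩ := exists_mem_ne (hQ.card_inter_eq_two_of_subset_symmDiff hb₁ hb₂ h ▸
    one_lt_two) a
  exact ⟨b₁, hb₁, b₂, hb₂, rfl, t, mem_erase.2 ⟨hta, (mem_inter.1 ht).2⟩, hab, (mem_inter.1 ht).1⟩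

theorem eq_of_subset_symmDiff (hQ : IsXQuadrangle X Bl Q) (hL : IsLinearSpace X Bl k)
    (hb₁ : b₁ ∈ Bl) (hb₂ : b₂ ∈ Bl) (hc₂ : c₂ ∈ Bl) (h : Q ⊆ b₁ ∆ b₂) (h' : Q ⊆ b₁ ∆ c₂) :
    b₂ = c₂ := by
  have hQb₂ : b₂ ∩ Q = c₂ ∩ Q := by
    rw [inter_eq_sdiff_of_subset_symmDiff h, inter_eq_sdiff_of_subset_symmDiff h']
  refine hL.eq_of_one_lt_card_inter hb₂ hc₂ ?_
  calc 1 < #(b₂ ∩ Q) := by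
        rw [symmDiff_comm] at h
        rw [hQ.card_inter_eq_two_of_subset_symmDiff hb₂ hb₁ h]
        exact one_lt_two
    _ ≤ #(b₂ ∩ c₂) := card_le_card fun v hv =>
        mem_inter.2 ⟨(mem_inter.1 hv).1, (mem_inter.1 (hQb₂ ▸ hv)).1⟩

theorem exists_subset_symmDiff_of_sum_eq [AddCommGroup V] [Module (ZMod 2) V] {Q' : Finset V}
    (hQ : IsXQuadrangle X Bl Q) (hQ' : IsXQuadrangle X Bl Q') (hL : IsLinearSpace X Bl 5)
    (hzerosum : ∀ S : Finset V, S ⊆ X → 1 ≤ S.card → S.card ≤ 8 →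
        (∑ v ∈ S, v) = 0 →
        (∃ b ∈ Bl, S = b) ∨ ∃ b₁ ∈ Bl, ∃ b₂ ∈ Bl, b₁ ≠ b₂ ∧ S = symmDiff b₁ b₂)
    (hsum : ∑ v ∈ Q', v = ∑ v ∈ Q, v) (hne : Q' ≠ Q) :
    ∃ b₁ ∈ Bl, ∃ b₂ ∈ Bl, Q ⊆ b₁ ∆ b₂ ∧ Q' = b₁ ∆ b₂ \ Q := by
  have hcard := card_symmDiff_add_two_mul_card_inter Q Q'
  rw [hQ.2.1, hQ'.2.1] at hcard
  have hX : Q ∆ Q' ⊆ X := symmDiff_subset_union.trans (union_subset hQ.1 hQ'.1)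
  have hpos : 1 ≤ #(Q ∆ Q') := card_pos.2 (symmDiff_nonempty.2 hne.symm)
  have hzero : ∑ v ∈ Q ∆ Q', v = 0 := by
    rw [ZModModule.sum_symmDiff, hsum, ZModModule.add_self]
  rcases hzerosum _ hX hpos (by omega) hzero with ⟨b, hb, hbQ⟩ | ⟨b₁, hb₁, b₂, hb₂, hne₁₂, hbQ⟩
  · have := hL.card_of_mem b hb
    rw [← hbQ] at this
    omega
  · have hcard_b := card_symmDiff_add_two_mul_card_inter b₁ b₂
    rw [hL.card_of_mem b₁ hb₁, hL.card_of_mem b₂ hb₂, ← hbQ] at hcard_b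
    have := hL.card_inter_le_one hb₁ hb₂ hne₁₂
    have hdisj : Disjoint Q Q' := disjoint_iff_inter_eq_empty.2 (card_eq_zero.1 (by omega))
    refine ⟨b₁, hb₁, b₂, hb₂, ?_, ?_⟩
    · rw [← hbQ, symmDiff_eq_union hdisj]
      exact subset_union_left
    · rw [← hbQ, symmDiff_sdiff_left, hdisj.symm.sdiff_eq_left]

/-- Every block meets `b₁ ∆ b₂ \ Q` in at most two points: a block other than `b₁, b₂` meets
`b₁ ∆ b₂` itself in at most two, and `bᵢ` meets it in four points, two of which lie in `Q`. -/
theorem isXQuadrangle_symmDiff_sdiff (hQ : IsXQuadrangle X Bl Q)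
    (hP : IsProjectivePlane X Bl 5) (hb₁ : b₁ ∈ Bl) (hb₂ : b₂ ∈ Bl) (h : Q ⊆ b₁ ∆ b₂) :
    IsXQuadrangle X Bl (b₁ ∆ b₂ \ Q) := by
  have hne := hQ.ne_of_subset_symmDiff h
  have hcard := card_symmDiff_add_two_mul_card_inter b₁ b₂
  rw [hP.card_of_mem b₁ hb₁, hP.card_of_mem b₂ hb₂, hP.card_inter_of_ne b₁ hb₁ b₂ hb₂ hne]
    at hcard
  have hblock : ∀ {c₁ c₂}, c₁ ∈ Bl → c₂ ∈ Bl → Q ⊆ c₁ ∆ c₂ → #(c₁ ∩ (c₁ ∆ c₂ \ Q)) = 2 := by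
    intro c₁ c₂ hc₁ hc₂ hc
    have := card_sdiff_add_card_inter (c₁ ∩ (c₁ ∆ c₂)) Q
    rw [hP.card_inter_symmDiff hc₁ hc₂ (hQ.ne_of_subset_symmDiff hc), inter_assoc,
      inter_eq_right.2 hc, hQ.card_inter_eq_two_of_subset_symmDiff hc₁ hc₂ hc,
      inter_sdiff_assoc] at this
    omega
  refine isXQuadrangle_iff.2 ⟨?_, ?_, fun c hc => ?_⟩
  · exact sdiff_subset.trans <| symmDiff_subset_union.trans <|
      union_subset (hP.subset_of_mem b₁ hb₁) (hP.subset_of_mem b₂ hb₂)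
  · rw [card_sdiff_of_subset h, hQ.2.1]
    omega
  · by_contra! h3
    rcases hP.eq_or_eq_of_two_lt_card_inter_symmDiff hb₁ hb₂ hc
      (h3.trans_le (card_le_card (inter_subset_inter_left sdiff_subset))) with rfl | rfl
    · exact absurd (hblock hb₁ hb₂ h) h3.ne'
    · rw [symmDiff_comm] at h h3
      exact absurd (hblock hb₂ hb₁ h) h3.ne'

theorem exists_forall_eq_symmDiff_sdiff [AddCommGroup V] [Module (ZMod 2) V] {Q' : Finset V}
    (hQ : IsXQuadrangle X Bl Q) (hQ' : IsXQuadrangle X Bl Q') (hL : IsLinearSpace X Bl 5)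
    (hzerosum : ∀ S : Finset V, S ⊆ X → 1 ≤ S.card → S.card ≤ 8 →
        (∑ v ∈ S, v) = 0 →
        (∃ b ∈ Bl, S = b) ∨ ∃ b₁ ∈ Bl, ∃ b₂ ∈ Bl, b₁ ≠ b₂ ∧ S = symmDiff b₁ b₂)
    (hsum : ∑ v ∈ Q', v = ∑ v ∈ Q, v) (hne : Q' ≠ Q) {a : V} (ha : a ∈ Q) :
    ∃ t ∈ Q.erase a, ∀ c₁ ∈ Bl, ∀ c₂ ∈ Bl, a ∈ c₁ → t ∈ c₁ → Q ⊆ c₁ ∆ c₂ →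
      Q' = c₁ ∆ c₂ \ Q := by
  obtain ⟨b₁, hb₁, b₂, hb₂, hQb, rfl⟩ :=
    hQ.exists_subset_symmDiff_of_sum_eq hQ' hL hzerosum hsum hne
  obtain ⟨d₁, hd₁, d₂, hd₂, hdb, t, ht, had, htd⟩ :=
    hQ.exists_pairing_of_subset_symmDiff hb₁ hb₂ hQb ha
  refine ⟨t, ht, fun c₁ hc₁ c₂ hc₂ hac htc hQc => ?_⟩
  rw [← hdb] at hQb ⊢
  obtain rfl := hL.eq_of_mem_of_mem hd₁ hc₁ (ne_of_mem_erase ht).symm had htd hac htc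
  rw [hQ.eq_of_subset_symmDiff hL hd₁ hd₂ hc₂ hQb hQc]

theorem eq_of_symmDiff_sdiff_eq (hQ : IsXQuadrangle X Bl Q) (hP : IsProjectivePlane X Bl 5)
    (hb₁ : b₁ ∈ Bl) (hb₂ : b₂ ∈ Bl) (hc₁ : c₁ ∈ Bl) (hc₂ : c₂ ∈ Bl) (h₁ : Q ⊆ b₁ ∆ b₂)
    (h₂ : Q ⊆ c₁ ∆ c₂) (h : b₁ ∆ b₂ \ Q = c₁ ∆ c₂ \ Q) {a t t' : V} (ha : a ∈ Q)
    (ht : t ∈ Q.erase a) (ht' : t' ∈ Q.erase a) (hab : a ∈ b₁) (htb : t ∈ b₁) (hac : a ∈ c₁)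
    (htc : t' ∈ c₁) : t = t' := by
  have hD : c₁ ∆ c₂ = b₁ ∆ b₂ := by
    rw [← union_sdiff_of_subset h₁, ← union_sdiff_of_subset h₂, h]
  obtain rfl | rfl := hP.eq_or_eq_of_symmDiff_eq (by norm_num) hb₁ hb₂ hc₁ hc₂
    (hQ.ne_of_subset_symmDiff h₂) hD
  · by_contra htt'
    exact hQ.notMem_of_mem hc₁ ha (mem_of_mem_erase ht) (mem_of_mem_erase ht')
      (ne_of_mem_erase ht).symm (ne_of_mem_erase ht').symm htt' hab htb htc
  · exact absurd (h₁ ha) (by simp [mem_symmDiff, hab, hac])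

theorem ncard_sameCenter_eq_three [AddCommGroup V] [Module (ZMod 2) V]
    (hQ : IsXQuadrangle X Bl Q) (hP : IsProjectivePlane X Bl 5)
    (hBl : ∀ b ∈ Bl, ∑ v ∈ b, v = 0)
    (hzerosum : ∀ S : Finset V, S ⊆ X → 1 ≤ S.card → S.card ≤ 8 →
        (∑ v ∈ S, v) = 0 →
        (∃ b ∈ Bl, S = b) ∨ ∃ b₁ ∈ Bl, ∃ b₂ ∈ Bl, b₁ ≠ b₂ ∧ S = symmDiff b₁ b₂) :
    Set.ncard {Q' : Finset V | IsXQuadrangle X Bl Q' ∧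
        (∑ v ∈ Q', v) = (∑ v ∈ Q, v) ∧ Q' ≠ Q} = 3 := by
  obtain ⟨a, ha⟩ : Q.Nonempty := card_pos.1 (by rw [hQ.2.1]; norm_num)
  choose! β₁ hβ₁ β₂ hβ₂ haβ htβ hQβ using fun t (ht : t ∈ Q.erase a) =>
    hQ.exists_subset_symmDiff_of_mem hP.toIsLinearSpace ha (mem_of_mem_erase ht)
      (ne_of_mem_erase ht).symm
  have hS : {Q' : Finset V | IsXQuadrangle X Bl Q' ∧ (∑ v ∈ Q', v) = (∑ v ∈ Q, v) ∧ Q' ≠ Q} =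
      (fun t => β₁ t ∆ β₂ t \ Q) '' (Q.erase a : Set V) := by
    ext Q'
    constructor
    · rintro ⟨hQ', hsum, hne⟩
      obtain ⟨t, ht, hQ'_eq⟩ :=
        hQ.exists_forall_eq_symmDiff_sdiff hQ' hP.toIsLinearSpace hzerosum hsum hne ha
      exact ⟨t, ht, (hQ'_eq _ (hβ₁ t ht) _ (hβ₂ t ht) (haβ t ht) (htβ t ht) (hQβ t ht)).symm⟩
    · rintro ⟨t, ht, rfl⟩
      refine ⟨hQ.isXQuadrangle_symmDiff_sdiff hP (hβ₁ t ht) (hβ₂ t ht) (hQβ t ht), ?_,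
        fun h => (mem_sdiff.1 (h.symm ▸ ha)).2 ha⟩
      change ∑ v ∈ β₁ t ∆ β₂ t \ Q, v = _
      rw [ZModModule.sum_sdiff_of_subset (hQβ t ht), ZModModule.sum_symmDiff,
        hBl _ (hβ₁ t ht), hBl _ (hβ₂ t ht), zero_add, zero_add]
  have hinj : Set.InjOn (fun t => β₁ t ∆ β₂ t \ Q) (Q.erase a : Set V) :=
    fun t ht t' ht' h => hQ.eq_of_symmDiff_sdiff_eq hP (hβ₁ t ht) (hβ₂ t ht) (hβ₁ t' ht')
      (hβ₂ t' ht') (hQβ t ht) (hQβ t' ht') h ha ht ht' (haβ t ht) (htβ t ht) (haβ t' ht')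
      (htβ t' ht')
  rw [hS, hinj.ncard_image, Set.ncard_coe_finset, card_erase_of_mem ha, hQ.2.1]

end IsXQuadrangle

end Quadrangle

theorem quadrangle_center_three_others_general
    (V : Type*) [AddCommGroup V] [Module (ZMod 2) V] [DecidableEq V]
    (X : Finset V) (hcard : X.card = 21)
    (Bl : Set (Finset V))
    (hBl : ∀ b ∈ Bl, b ⊆ X ∧ b.card = 5 ∧ (∑ v ∈ b, v) = 0)
    (hpair : ∀ x ∈ X, ∀ y ∈ X, x ≠ y → ∃! b, b ∈ Bl ∧ x ∈ b ∧ y ∈ b)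
    (hzerosum : ∀ S : Finset V, S ⊆ X → 1 ≤ S.card → S.card ≤ 8 →
        (∑ v ∈ S, v) = 0 →
        (∃ b ∈ Bl, S = b) ∨ ∃ b₁ ∈ Bl, ∃ b₂ ∈ Bl, b₁ ≠ b₂ ∧ S = symmDiff b₁ b₂)
    (Q : Finset V) (hQ : IsXQuadrangle X Bl Q) :
    Set.ncard {Q' : Finset V | IsXQuadrangle X Bl Q' ∧
        (∑ v ∈ Q', v) = (∑ v ∈ Q, v) ∧ Q' ≠ Q} = 3 ∧
    ∀ Q' : Finset V, IsXQuadrangle X Bl Q' → (∑ v ∈ Q', v) = (∑ v ∈ Q, v) → Q' ≠ Q →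
      ∃ b₁ ∈ Bl, ∃ b₂ ∈ Bl, b₁ ≠ b₂ ∧ (b₁ ∩ Q).card = 2 ∧ (b₂ ∩ Q).card = 2 ∧
        Q' = symmDiff b₁ b₂ \ Q := by
  have hL : IsLinearSpace X Bl 5 :=
    ⟨fun b hb => (hBl b hb).1, fun b hb => (hBl b hb).2.1, hpair⟩
  have hP := hL.isProjectivePlane (by omega)
  refine ⟨hQ.ncard_sameCenter_eq_three hP (fun b hb => (hBl b hb).2.2) hzerosum,
    fun Q' hQ' hsum hne => ?_⟩
  obtain ⟨b₁, hb₁, b₂, hb₂, hQb, rfl⟩ :=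
    hQ.exists_subset_symmDiff_of_sum_eq hQ' hL hzerosum hsum hne
  refine ⟨b₁, hb₁, b₂, hb₂, hQ.ne_of_subset_symmDiff hQb,
    hQ.card_inter_eq_two_of_subset_symmDiff hb₁ hb₂ hQb, ?_, rfl⟩
  rw [symmDiff_comm] at hQb
  exact hQ.card_inter_eq_two_of_subset_symmDiff hb₂ hb₁ hQb

/-- In the configuration `M¹⁰(F₂)`: if a point `p` is the center (sum) of an
`X`-quadrangle `Q`, then `p` is the center of exactly three other `X`-quadrangles, each
obtained from a pairing of `Q`: there are two distinct blocks, each meeting `Q` in two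
points, such that the other quadrangle is the symmetric difference of the two blocks
minus `Q` (replacing the points of `Q` by the remaining points of the two blocks other
than their intersection point). -/
theorem quadrangle_center_three_others
    (V : Type*) [AddCommGroup V] [Module (ZMod 2) V] [DecidableEq V]
    (X : Finset V) (hX0 : (0 : V) ∉ X) (hcard : X.card = 21)
    (Bl : Set (Finset V))
    (hBl : ∀ b ∈ Bl, b ⊆ X ∧ b.card = 5 ∧ (∑ v ∈ b, v) = 0)
    (hpair : ∀ x ∈ X, ∀ y ∈ X, x ≠ y → ∃! b, b ∈ Bl ∧ x ∈ b ∧ y ∈ b)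
    (hno3 : ∀ x ∈ X, ∀ y ∈ X, x ≠ y → x + y ∉ X)
    (hno4 : ∀ s : Finset V, s ⊆ X → s.card = 4 →
        LinearIndependent (ZMod 2) (fun x : (s : Set V) => (x : V)))
    (hzerosum : ∀ S : Finset V, S ⊆ X → 1 ≤ S.card → S.card ≤ 8 →
        (∑ v ∈ S, v) = 0 →
        (∃ b ∈ Bl, S = b) ∨ ∃ b₁ ∈ Bl, ∃ b₂ ∈ Bl, b₁ ≠ b₂ ∧ S = symmDiff b₁ b₂)
    (Q : Finset V) (hQ : IsXQuadrangle X Bl Q) :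
    Set.ncard {Q' : Finset V | IsXQuadrangle X Bl Q' ∧
        (∑ v ∈ Q', v) = (∑ v ∈ Q, v) ∧ Q' ≠ Q} = 3 ∧
    ∀ Q' : Finset V, IsXQuadrangle X Bl Q' → (∑ v ∈ Q', v) = (∑ v ∈ Q, v) → Q' ≠ Q →
      ∃ b₁ ∈ Bl, ∃ b₂ ∈ Bl, b₁ ≠ b₂ ∧ (b₁ ∩ Q).card = 2 ∧ (b₂ ∩ Q).card = 2 ∧
        Q' = symmDiff b₁ b₂ \ Q :=
  quadrangle_center_three_others_general V X hcard Bl hBl hpair hzerosum Q hQ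
end

section
/- Let S₁,₂ be a normal rational cubic scroll in PG(4, K), |K| > 2, defined by a line L, a conic C in a complementary plane, and a projectivity φ : C → L, as the union of the transversal lines ⟨p, φ(p)⟩ for p ∈ C. Then any two S-conics (conics on the scroll meeting every transversal) intersect in a point of the scroll. -/
/-- Parametrization of the base conic `C` of the normal rational cubic scroll. -/
def scrollConic {K : Type*} [Field K] (a b : K) : Fin 5 → K :=
  ![a ^ 2, a * b, b ^ 2, 0, 0]

/-- Parametrization of the line `L` of the scroll; the projectivity `φ : C → L` sends
`scrollConic a b` to `scrollLine a b`. The transversal through the parameter `(a,b)` is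
the line `⟨scrollConic a b, scrollLine a b⟩`. -/
def scrollLine {K : Type*} [Field K] (a b : K) : Fin 5 → K :=
  ![0, 0, 0, a, b]

/-- An `S`-conic on the normal rational cubic scroll: a conic (a normal rational curve
of degree 2, parametrized quadratically with linearly independent coefficient vectors,
hence spanning a plane) that meets each transversal line of the scroll. -/
def IsScrollConic {K : Type*} [Field K] (γ : K → K → (Fin 5 → K)) : Prop :=
  (∃ u v w : Fin 5 → K, LinearIndependent K ![u, v, w] ∧
      ∀ a b : K, γ a b = a ^ 2 • u + (a * b) • v + b ^ 2 • w) ∧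
  ∀ a b : K, ¬(a = 0 ∧ b = 0) →
    γ a b ≠ 0 ∧ γ a b ∈ Submodule.span K {scrollConic a b, scrollLine a b}

lemma scrollConic_form {K : Type*} [Field K] {t : K} (ht0 : t ≠ 0) (ht1 : t ≠ 1)
    {γ : K → K → (Fin 5 → K)} (h : IsScrollConic γ) :
    ∃ c p q : K, c ≠ 0 ∧ ∀ a b : K,
      γ a b = c • scrollConic a b + (a * p + b * q) • scrollLine a b := by
  obtain ⟨⟨u, v, w, hind, hγ⟩, hmem⟩ := h
  obtain ⟨-, hm1⟩ := hmem 1 0 (by simp)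
  obtain ⟨l1, m1, he1⟩ := Submodule.mem_span_pair.mp hm1
  obtain ⟨-, hm2⟩ := hmem 0 1 (by simp)
  obtain ⟨l2, m2, he2⟩ := Submodule.mem_span_pair.mp hm2
  obtain ⟨-, hm3⟩ := hmem 1 1 (by simp)
  obtain ⟨l3, m3, he3⟩ := Submodule.mem_span_pair.mp hm3
  obtain ⟨-, hm4⟩ := hmem 1 t (by simp [ht0])
  obtain ⟨l4, m4, he4⟩ := Submodule.mem_span_pair.mp hm4
  rw [hγ] at he1 he2 he3 he4
  have f3 : Fin.succ 2 = (3 : Fin 5) := rfl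
  have f4 : Fin.succ (Fin.succ 2) = (4 : Fin 5) := rfl
  have hu : u = ![l1, 0, 0, m1, 0] := by
    funext i
    have h' := congrFun he1 i
    fin_cases i <;> simp [scrollConic, scrollLine] at h' ⊢ <;>
      first | exact h'.symm | linear_combination -h'
  have hw : w = ![0, 0, l2, 0, m2] := by
    funext i
    have h' := congrFun he2 i
    fin_cases i <;> simp [scrollConic, scrollLine] at h' ⊢ <;>
      first | exact h'.symm | linear_combination -h'
  have hv : v = ![l3 - l1, l3, l3 - l2, m3 - m1, m3 - m2] := by
    funext i
    have h' := congrFun he3 i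
    rw [hu, hw] at h'
    fin_cases i <;>
      simp [scrollConic, scrollLine, Matrix.vecHead, Matrix.vecTail, f3, f4] at h' ⊢ <;>
      linear_combination -h'
  rw [hu, hv, hw] at he4
  have e0 : l4 = l1 + t * (l3 - l1) := by
    have h' := congrFun he4 0; simp [scrollConic, scrollLine] at h'; linear_combination h'
  have e1 : l4 * t = t * l3 := by
    have h' := congrFun he4 1; simp [scrollConic, scrollLine] at h'; linear_combination h'
  have e2 : l4 * t ^ 2 = t * (l3 - l2) + t ^ 2 * l2 := by
    have h' := congrFun he4 2; simp [scrollConic, scrollLine] at h'; linear_combination h'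
  have e3 : m4 = m1 + t * (m3 - m1) := by
    have h' := congrFun he4 3; simp [scrollConic, scrollLine] at h'; linear_combination h'
  have e4 : m4 * t = t * (m3 - m2) + t ^ 2 * m2 := by
    have h' := congrFun he4 4; simp [scrollConic, scrollLine] at h'; linear_combination h'
  have ht1' : t - 1 ≠ 0 := sub_ne_zero.mpr ht1
  have hl4 : l4 = l3 := mul_right_cancel₀ ht0 (by linear_combination e1)
  rw [hl4] at e0 e2
  have hl1 : l1 = l3 := by
    have h0 : (l1 - l3) * (t - 1) = 0 := by linear_combination e0
    exact sub_eq_zero.mp ((mul_eq_zero.mp h0).resolve_right ht1')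
  have hl2 : l2 = l3 := by
    have h0 : (l2 - l3) * ((t - 1) * t) = 0 := by linear_combination -e2
    exact sub_eq_zero.mp ((mul_eq_zero.mp h0).resolve_right (mul_ne_zero ht1' ht0))
  have hm3 : m3 = m1 + m2 := by
    have h0 : (m3 - (m1 + m2)) * ((t - 1) * t) = 0 := by linear_combination e4 - t * e3
    exact sub_eq_zero.mp ((mul_eq_zero.mp h0).resolve_right (mul_ne_zero ht1' ht0))
  have hu' : u = ![l3, 0, 0, m1, 0] := by rw [hu, hl1]
  have hw' : w = ![0, 0, l3, 0, m2] := by rw [hw, hl2]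
  have hv' : v = ![0, l3, 0, m2, m1] := by
    rw [hv, hl1, hl2, hm3]; funext i; fin_cases i <;> simp
  refine ⟨l3, m1, m2, ?_, ?_⟩
  · intro hc
    rw [hc] at hu' hv' hw'
    have hsum : ∑ i, (![m2 ^ 2, -(m1 * m2), m1 ^ 2] : Fin 3 → K) i • ![u, v, w] i = 0 := by
      rw [Fin.sum_univ_three]
      simp only [Matrix.cons_val_zero, Matrix.cons_val_one, Matrix.cons_val_two,
        Matrix.head_cons, Matrix.tail_cons]
      rw [hu', hv', hw']
      funext i; fin_cases i <;> simp <;> ring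
    have hz := Fintype.linearIndependent_iff.mp hind _ hsum
    have hm2 : m2 = 0 := by
      have := hz 0; simpa [pow_eq_zero_iff] using this
    have hm1 : m1 = 0 := by
      have := hz 2; simpa [pow_eq_zero_iff] using this
    have : u = 0 := by rw [hu', hm1]; funext i; fin_cases i <;> simp
    exact hind.ne_zero 0 (by simpa using this)
  · intro a b
    rw [hγ, hu', hv', hw']
    funext i
    fin_cases i <;> simp [scrollConic, scrollLine] <;> ring

/-- Let `S₁,₂` be a normal rational cubic scroll in `PG(4,K)`, `|K| > 2`. Any two
`S`-conics intersect in a point of the scroll: there is a parameter `(a,b) ≠ (0,0)` at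
which the two conics pass through the same projective point (their representative
vectors differ by a nonzero scalar). -/
theorem scroll_conics_meet
    (K : Type*) [Field K] (hK : ∃ c : K, c ≠ 0 ∧ c ≠ 1)
    (γ₁ γ₂ : K → K → (Fin 5 → K))
    (h₁ : IsScrollConic γ₁) (h₂ : IsScrollConic γ₂) :
    ∃ a b : K, ¬(a = 0 ∧ b = 0) ∧ ∃ k : K, k ≠ 0 ∧ γ₁ a b = k • γ₂ a b := by
  obtain ⟨t, ht0, ht1⟩ := hK
  obtain ⟨c₁, p₁, q₁, hc₁, hf₁⟩ := scrollConic_form ht0 ht1 h₁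
  obtain ⟨c₂, p₂, q₂, hc₂, hf₂⟩ := scrollConic_form ht0 ht1 h₂
  have key : ∀ a b : K, ¬(a = 0 ∧ b = 0) →
      c₂ * (a * p₁ + b * q₁) = c₁ * (a * p₂ + b * q₂) →
      γ₁ a b = (c₁ / c₂) • γ₂ a b := by
    intro a b hab hlin
    rw [hf₁, hf₂, smul_add, smul_smul, smul_smul]
    congr 1
    · rw [div_mul_cancel₀ _ hc₂]
    · congr 1
      field_simp
      first | linear_combination hlin | linear_combination -hlin | linear_combination c₂ * hlin | linear_combination -(c₂ * hlin)
  set A := c₂ * p₁ - c₁ * p₂ with hA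
  set B := c₂ * q₁ - c₁ * q₂ with hB
  by_cases hAB : A = 0 ∧ B = 0
  · refine ⟨1, 0, by simp, c₁ / c₂, div_ne_zero hc₁ hc₂, key 1 0 (by simp) ?_⟩
    have := hAB.1
    rw [hA] at this
    linear_combination this
  · refine ⟨B, -A, ?_, c₁ / c₂, div_ne_zero hc₁ hc₂, key B (-A) ?_ (by rw [hA, hB]; ring)⟩
    all_goals
      rintro ⟨hB0, hA0⟩
      exact hAB ⟨neg_eq_zero.mp hA0, hB0⟩
end

section
/- Let B be a quadratic associative division algebra over a field K with involution b ↦ b̄, and define the formal Laurent series ring B((t)) with multiplication twisted by the involution: (tⁱbᵢ)(tʲbⱼ) equals t^{i+j}(bᵢbⱼ) if i,j are even; t^{i+j}(bⱼbᵢ) if i is odd and j even; t^{i+j}(b̄ᵢbⱼ) if i even and j odd; t^{i+j}(bⱼb̄ᵢ) if i,j odd. Then this multiplication makes B((t)) an alternative ring, and ν(Σ tⁱbᵢ) = min{i : bᵢ ≠ 0} is a valuation: ν(xy) = ν(x) + ν(y) for nonzero x, y. -/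
/-!
Only the parities of the degrees enter the product of two monomials, and in a quadratic algebra
the trace `b + b̄`, the norm `b b̄` and its polarization `b c̄ + c b̄` are central. Using this, each
monomial instance of the linearized alternative laws `x(yz) + y(xz) = (xy)z + (yx)z` and
`(xy)z + (xz)y = x(yz) + x(zy)` is a short computation in `B`, parity case by parity case.

The coefficient of `tⁿ` in `x(xy)` or `(xx)y` is a finite double sum over the degrees `(i, j)` of
the two factors taken from `x`; pairing `(i, j)` with `(j, i)` matches the two sums, the diagonal
terms being the non-linearized law for monomials (which the linearized one does not imply in
characteristic 2). For `(xy)y = x(yy)` one pairs the degrees of the two factors taken from `y`.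

The valuation is additive because the lowest coefficient of `xy` is the twisted product of the
lowest coefficients of `x` and `y`, which is nonzero in a division ring.
-/

/-- The twisted product of coefficients in `B((t))`: the coefficient contribution of
`(tⁱb)(tʲc)` is `bc`, `cb`, `b̄c`, `cb̄` according as `(i,j)` has parities
(even, even), (odd, even), (even, odd), (odd, odd). -/
def twistTerm {B : Type*} [Ring B] (conj : B → B) (i j : ℤ) (b c : B) : B :=
  if i % 2 = 0 then (if j % 2 = 0 then b * c else conj b * c)
  else (if j % 2 = 0 then c * b else c * conj b)

lemma finsum_eq_finsum_of_involutive {α M : Type*} [AddCommGroup M] {f g : α → M}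
    (hf : f.HasFiniteSupport) (hg : g.HasFiniteSupport) {e : α → α} (he : Function.Involutive e)
    (hpair : ∀ a, f a + f (e a) = g a + g (e a)) (hfix : ∀ a, e a = a → f a = g a) :
    ∑ᶠ a, f a = ∑ᶠ a, g a := by
  have hfin : (Function.support fun a => f a - g a).Finite := hf.sub hg
  rw [← sub_eq_zero, ← finsum_sub_distrib hf hg, finsum_eq_sum _ hfin]
  have hanti : ∀ a, f (e a) - g (e a) = -(f a - g a) := fun a =>
    eq_neg_of_add_eq_zero_left (by rw [← sub_eq_zero.2 (hpair a)]; abel)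
  refine Finset.sum_involution (fun a _ => e a) (fun a _ => by rw [hanti, add_neg_cancel])
    (fun a _ hne hea => hne (sub_eq_zero.2 (hfix a hea))) (fun a ha => ?_) (fun a _ => he a)
  simp only [Set.Finite.mem_toFinset, Function.mem_support] at ha ⊢
  rwa [hanti, neg_ne_zero]

structure IsQuadraticInvolution {B : Type*} [Ring B] (conj : B → B) : Prop where
  map_add : ∀ x y, conj (x + y) = conj x + conj y
  map_mul_rev : ∀ x y, conj (x * y) = conj y * conj x
  conj_conj : ∀ x, conj (conj x) = x
  commute_add_conj : ∀ a b, Commute (b + conj b) a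
  commute_mul_conj : ∀ a b, Commute (b * conj b) a

namespace IsQuadraticInvolution

variable {B : Type*} [Ring B] {conj : B → B}

lemma map_zero (hq : IsQuadraticInvolution conj) : conj 0 = 0 := by
  simpa using hq.map_add 0 0

lemma conj_eq_zero_iff (hq : IsQuadraticInvolution conj) (b : B) : conj b = 0 ↔ b = 0 :=
  ⟨fun h => by rw [← hq.conj_conj b, h, hq.map_zero], fun h => h ▸ hq.map_zero⟩

lemma conj_mul_self (hq : IsQuadraticInvolution conj) (b : B) : conj b * b = b * conj b := by
  linear_combination (norm := noncomm_ring) (hq.commute_add_conj b b).eq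

lemma commute_mul_conj_add (hq : IsQuadraticInvolution conj) (a b c : B) :
    Commute (b * conj c + c * conj b) a := by
  have h : b * conj c + c * conj b = (b + c) * conj (b + c) - b * conj b - c * conj c := by
    rw [hq.map_add]; noncomm_ring
  rw [h]
  exact ((hq.commute_mul_conj a _).sub_left (hq.commute_mul_conj a b)).sub_left
    (hq.commute_mul_conj a c)

lemma conj_mul_add_conj_mul (hq : IsQuadraticInvolution conj) (b c : B) :
    conj c * b + conj b * c = b * conj c + c * conj b := by
  linear_combination (norm := noncomm_ring)
    (hq.commute_add_conj b c).eq + (hq.commute_add_conj c b).eq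

lemma twistTerm_left_alternative (hq : IsQuadraticInvolution conj) (n i j : ℤ) (b c d : B) :
    twistTerm conj i (n - i) b (twistTerm conj j (n - i - j) c d)
      + twistTerm conj j (n - j) c (twistTerm conj i (n - i - j) b d)
    = twistTerm conj (i + j) (n - i - j) (twistTerm conj i j b c) d
      + twistTerm conj (i + j) (n - i - j) (twistTerm conj j i c b) d := by
  by_cases hi : Even i <;> by_cases hj : Even j <;> by_cases hn : Even n <;>
    simp only [twistTerm, ← Int.even_iff, Int.even_add, Int.even_sub, hi, hj, hn, hq.map_mul_rev,
      hq.conj_conj, iff_true, iff_false, not_true_eq_false, ↓reduceIte]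
  · noncomm_ring
  · noncomm_ring
  · linear_combination (norm := noncomm_ring) (hq.commute_add_conj (d * conj c) b).eq
  · linear_combination (norm := noncomm_ring) congrArg (· * c) (hq.commute_add_conj d b).eq
  · linear_combination (norm := noncomm_ring) (hq.commute_add_conj (d * conj b) c).eq
  · linear_combination (norm := noncomm_ring) congrArg (· * b) (hq.commute_add_conj d c).eq
  · linear_combination (norm := noncomm_ring) (hq.commute_mul_conj_add d c b).eq.symm
  · linear_combination (norm := noncomm_ring) congrArg (d * ·) (hq.conj_mul_add_conj_mul b c) +
      (hq.commute_mul_conj_add d b c).eq.symm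

lemma twistTerm_left_alternative_diag (hq : IsQuadraticInvolution conj) (n i : ℤ) (b d : B) :
    twistTerm conj i (n - i) b (twistTerm conj i (n - i - i) b d)
      = twistTerm conj (i + i) (n - i - i) (twistTerm conj i i b b) d := by
  by_cases hi : Even i <;> by_cases hn : Even n <;>
    simp only [twistTerm, ← Int.even_iff, Int.even_add, Int.even_sub, hi, hn, hq.map_mul_rev,
      hq.conj_conj, iff_true, iff_false, not_true_eq_false, ↓reduceIte]
  · noncomm_ring
  · noncomm_ring
  · linear_combination (norm := noncomm_ring) (hq.commute_mul_conj d b).eq.symm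
  · linear_combination (norm := noncomm_ring)
      congrArg (d * ·) (hq.conj_mul_self b) + (hq.commute_mul_conj d b).eq.symm

lemma twistTerm_right_alternative (hq : IsQuadraticInvolution conj) (n i j : ℤ) (b c d : B) :
    twistTerm conj (i + j) (n - i - j) (twistTerm conj i j b c) d
      + twistTerm conj (n - j) j (twistTerm conj i (n - i - j) b d) c
    = twistTerm conj i (n - i) b (twistTerm conj j (n - i - j) c d)
      + twistTerm conj i (n - i) b (twistTerm conj (n - i - j) j d c) := by
  by_cases hi : Even i <;> by_cases hj : Even j <;> by_cases hn : Even n <;>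
    simp only [twistTerm, ← Int.even_iff, Int.even_add, Int.even_sub, hi, hj, hn, hq.map_mul_rev,
      hq.conj_conj, iff_true, iff_false, not_true_eq_false, ↓reduceIte]
  · noncomm_ring
  · linear_combination (norm := noncomm_ring) congrArg (· * d) (hq.commute_add_conj (conj b) c).eq
  · linear_combination (norm := noncomm_ring) (hq.commute_mul_conj_add b d c).eq
  · linear_combination (norm := noncomm_ring) congrArg (· * c) (hq.commute_add_conj (conj b) d).eq
  · linear_combination (norm := noncomm_ring) (hq.commute_add_conj (d * conj b) c).eq.symm
  · noncomm_ring
  · linear_combination (norm := noncomm_ring) (hq.commute_add_conj (c * conj b) d).eq.symm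
  · linear_combination (norm := noncomm_ring)
      congrArg (b * ·) (hq.conj_mul_add_conj_mul d c) + (hq.commute_mul_conj_add b d c).eq.symm

lemma twistTerm_right_alternative_diag (hq : IsQuadraticInvolution conj) (i j : ℤ) (b c : B) :
    twistTerm conj (i + j) j (twistTerm conj i j b c) c
      = twistTerm conj i (j + j) b (twistTerm conj j j c c) := by
  by_cases hi : Even i <;> by_cases hj : Even j <;>
    simp only [twistTerm, ← Int.even_iff, Int.even_add, hi, hj, hq.map_mul_rev, hq.conj_conj,
      iff_true, iff_false, not_true_eq_false, ↓reduceIte]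
  · noncomm_ring
  · linear_combination (norm := noncomm_ring) (hq.commute_mul_conj b c).eq
  · noncomm_ring
  · linear_combination (norm := noncomm_ring)
      congrArg (b * ·) (hq.conj_mul_self c) + (hq.commute_mul_conj b c).eq.symm

end IsQuadraticInvolution

section twistTerm

variable {B : Type*} [Ring B] (conj : B → B)

lemma twistTerm_zero_right (i j : ℤ) (b : B) : twistTerm conj i j b 0 = 0 := by
  unfold twistTerm; split_ifs <;> simp

lemma twistTerm_add_right (i j : ℤ) (b c c' : B) :
    twistTerm conj i j b (c + c') = twistTerm conj i j b c + twistTerm conj i j b c' := by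
  unfold twistTerm; split_ifs <;> noncomm_ring

variable {conj}

lemma twistTerm_zero_left (h0 : conj 0 = 0) (i j : ℤ) (c : B) : twistTerm conj i j 0 c = 0 := by
  unfold twistTerm; split_ifs <;> simp [h0]

lemma twistTerm_add_left (hadd : ∀ x y, conj (x + y) = conj x + conj y) (i j : ℤ) (b b' c : B) :
    twistTerm conj i j (b + b') c = twistTerm conj i j b c + twistTerm conj i j b' c := by
  unfold twistTerm; split_ifs <;> simp only [hadd, add_mul, mul_add]

lemma ne_zero_of_twistTerm_ne_zero (h0 : conj 0 = 0) {i j : ℤ} {b c : B}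
    (h : twistTerm conj i j b c ≠ 0) : b ≠ 0 ∧ c ≠ 0 :=
  ⟨by rintro rfl; exact h (twistTerm_zero_left h0 i j c),
    by rintro rfl; exact h (twistTerm_zero_right conj i j b)⟩

lemma twistTerm_ne_zero [NoZeroDivisors B] (hconj : ∀ b, conj b = 0 → b = 0) (i j : ℤ) {b c : B}
    (hb : b ≠ 0) (hc : c ≠ 0) : twistTerm conj i j b c ≠ 0 := by
  have hb' : conj b ≠ 0 := mt (hconj b) hb
  unfold twistTerm; split_ifs <;> exact mul_ne_zero ‹_› ‹_›

lemma twistTerm_finsum_right {α : Type*} {f : α → B} (hf : f.HasFiniteSupport) (i j : ℤ)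
    (b : B) :
    twistTerm conj i j b (∑ᶠ a, f a) = ∑ᶠ a, twistTerm conj i j b (f a) :=
  (AddMonoidHom.mk' _ (twistTerm_add_right conj i j b)).map_finsum hf

lemma twistTerm_finsum_left (hadd : ∀ x y, conj (x + y) = conj x + conj y) {α : Type*}
    {f : α → B} (hf : f.HasFiniteSupport) (i j : ℤ) (c : B) :
    twistTerm conj i j (∑ᶠ a, f a) c = ∑ᶠ a, twistTerm conj i j (f a) c :=
  (AddMonoidHom.mk' (twistTerm conj i j · c) (twistTerm_add_left hadd i j · · c)).map_finsum hf

end twistTerm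

section Nested

variable {B : Type*} [Ring B] (conj : B → B) (x y z : HahnSeries ℤ B) (n : ℤ)

def rightNestedTerm (p : ℤ × ℤ) : B :=
  twistTerm conj p.1 (n - p.1) (x.coeff p.1)
    (twistTerm conj p.2 (n - p.1 - p.2) (y.coeff p.2) (z.coeff (n - p.1 - p.2)))

def leftNestedTerm (p : ℤ × ℤ) : B :=
  twistTerm conj (p.1 + p.2) (n - p.1 - p.2) (twistTerm conj p.1 p.2 (x.coeff p.1) (y.coeff p.2))
    (z.coeff (n - p.1 - p.2))

lemma finite_coeff_ne_zero_triple :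
    {p : ℤ × ℤ | x.coeff p.1 ≠ 0 ∧ y.coeff p.2 ≠ 0 ∧ z.coeff (n - p.1 - p.2) ≠ 0}.Finite := by
  refine (Set.finite_Icc (x.order, y.order)
    (n - y.order - z.order, n - x.order - z.order)).subset ?_
  rintro ⟨i, j⟩ ⟨hx, hy, hz⟩
  have := HahnSeries.order_le_of_coeff_ne_zero hx
  have := HahnSeries.order_le_of_coeff_ne_zero hy
  have := HahnSeries.order_le_of_coeff_ne_zero hz
  simp only [Set.mem_Icc, Prod.mk_le_mk]
  omega

variable {conj}

lemma hasFiniteSupport_rightNestedTerm (h0 : conj 0 = 0) :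
    (rightNestedTerm conj x y z n).HasFiniteSupport := by
  refine (finite_coeff_ne_zero_triple x y z n).subset fun p hp => ?_
  obtain ⟨hx, hyz⟩ := ne_zero_of_twistTerm_ne_zero h0 hp
  exact ⟨hx, ne_zero_of_twistTerm_ne_zero h0 hyz⟩

lemma hasFiniteSupport_leftNestedTerm (h0 : conj 0 = 0) :
    (leftNestedTerm conj x y z n).HasFiniteSupport := by
  refine (finite_coeff_ne_zero_triple x y z n).subset fun p hp => ?_
  obtain ⟨hxy, hz⟩ := ne_zero_of_twistTerm_ne_zero h0 hp
  exact ⟨(ne_zero_of_twistTerm_ne_zero h0 hxy).1, (ne_zero_of_twistTerm_ne_zero h0 hxy).2, hz⟩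

lemma hasFiniteSupport_twistTerm_coeff (h0 : conj 0 = 0) (x y : HahnSeries ℤ B) (n : ℤ) :
    (fun i => twistTerm conj i (n - i) (x.coeff i) (y.coeff (n - i))).HasFiniteSupport := by
  refine (Set.finite_Icc x.order (n - y.order)).subset fun i hi => ?_
  obtain ⟨hx, hy⟩ := ne_zero_of_twistTerm_ne_zero h0 hi
  have := HahnSeries.order_le_of_coeff_ne_zero hx
  have := HahnSeries.order_le_of_coeff_ne_zero hy
  simp only [Set.mem_Icc]
  omega

end Nested

def IsTwistedLaurentMul {B : Type*} [Ring B] (conj : B → B)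
    (m : HahnSeries ℤ B → HahnSeries ℤ B → HahnSeries ℤ B) : Prop :=
  ∀ x y n, (m x y).coeff n = ∑ᶠ i : ℤ, twistTerm conj i (n - i) (x.coeff i) (y.coeff (n - i))

namespace IsTwistedLaurentMul

variable {B : Type*} [Ring B] {conj : B → B}
  {m : HahnSeries ℤ B → HahnSeries ℤ B → HahnSeries ℤ B} (hm : IsTwistedLaurentMul conj m)
include hm

lemma coeff_eq_zero_of_lt_order_add (h0 : conj 0 = 0) {x y : HahnSeries ℤ B} {k : ℤ}
    (hk : k < x.order + y.order) : (m x y).coeff k = 0 := by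
  rw [hm]
  refine finsum_eq_zero_of_forall_eq_zero fun i => ?_
  rcases lt_or_ge i x.order with hi | hi
  · rw [HahnSeries.coeff_eq_zero_of_lt_order hi, twistTerm_zero_left h0]
  · rw [HahnSeries.coeff_eq_zero_of_lt_order (by omega : k - i < y.order), twistTerm_zero_right]

lemma coeff_order_add_order (h0 : conj 0 = 0) (x y : HahnSeries ℤ B) :
    (m x y).coeff (x.order + y.order)
      = twistTerm conj x.order y.order (x.coeff x.order) (y.coeff y.order) := by
  rw [hm, finsum_eq_single _ x.order fun i hi => ?_, add_sub_cancel_left]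
  rcases lt_or_gt_of_ne hi with hi | hi
  · rw [HahnSeries.coeff_eq_zero_of_lt_order hi, twistTerm_zero_left h0]
  · rw [HahnSeries.coeff_eq_zero_of_lt_order (by omega : x.order + y.order - i < y.order),
      twistTerm_zero_right]

lemma ne_zero_and_order_eq [NoZeroDivisors B] (hconj : ∀ b, conj b = 0 ↔ b = 0)
    {x y : HahnSeries ℤ B} (hx : x ≠ 0) (hy : y ≠ 0) :
    m x y ≠ 0 ∧ (m x y).order = x.order + y.order := by
  have h0 : conj 0 = 0 := (hconj 0).2 rfl
  have hlead : (m x y).coeff (x.order + y.order) ≠ 0 := by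
    rw [hm.coeff_order_add_order h0]
    exact twistTerm_ne_zero (fun b => (hconj b).1) _ _ (mt HahnSeries.coeff_order_eq_zero.1 hx)
      (mt HahnSeries.coeff_order_eq_zero.1 hy)
  have hxy : m x y ≠ 0 := fun h => hlead (by rw [h, HahnSeries.coeff_zero])
  refine ⟨hxy, le_antisymm (HahnSeries.order_le_of_coeff_ne_zero hlead) (not_lt.1 fun hlt => ?_)⟩
  exact (mt HahnSeries.coeff_order_eq_zero.1 hxy) (hm.coeff_eq_zero_of_lt_order_add h0 hlt)

lemma coeff_right_nested (h0 : conj 0 = 0) (x y z : HahnSeries ℤ B) (n : ℤ) :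
    (m x (m y z)).coeff n = ∑ᶠ p, rightNestedTerm conj x y z n p := by
  rw [finsum_curry _ (hasFiniteSupport_rightNestedTerm x y z n h0), hm]
  refine finsum_congr fun i => ?_
  rw [hm, twistTerm_finsum_right (hasFiniteSupport_twistTerm_coeff h0 y z (n - i))]
  rfl

lemma coeff_left_nested (hadd : ∀ x y, conj (x + y) = conj x + conj y) (x y z : HahnSeries ℤ B)
    (n : ℤ) : (m (m x y) z).coeff n = ∑ᶠ p, leftNestedTerm conj x y z n p := by
  have h0 : conj 0 = 0 := by simpa using hadd 0 0
  let e : ℤ × ℤ ≃ ℤ × ℤ :=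
    ⟨fun p => (p.1 + p.2, p.1), fun q => (q.2, q.1 - q.2), fun _ => by simp, fun _ => by simp⟩
  let φ : ℤ × ℤ → B := fun q =>
    twistTerm conj q.1 (n - q.1)
      (twistTerm conj q.2 (q.1 - q.2) (x.coeff q.2) (y.coeff (q.1 - q.2))) (z.coeff (n - q.1))
  have hφ : ∀ p, φ (e p) = leftNestedTerm conj x y z n p := fun p => by
    simp [φ, e, leftNestedTerm, sub_add_eq_sub_sub]
  have hφfin : φ.HasFiniteSupport := by
    convert (hasFiniteSupport_leftNestedTerm x y z n h0).comp_of_injective e.symm.injective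
    ext q
    rw [Function.comp_apply, ← hφ, Equiv.apply_symm_apply]
  calc (m (m x y) z).coeff n = ∑ᶠ k, ∑ᶠ i, φ (k, i) := by
        rw [hm]
        refine finsum_congr fun k => ?_
        rw [hm, twistTerm_finsum_left hadd (hasFiniteSupport_twistTerm_coeff h0 x y k)]
    _ = ∑ᶠ q, φ q := (finsum_curry φ hφfin).symm
    _ = ∑ᶠ p, φ (e p) := (finsum_comp_equiv e).symm
    _ = ∑ᶠ p, leftNestedTerm conj x y z n p := finsum_congr hφ

lemma left_alternative (hq : IsQuadraticInvolution conj) (x y : HahnSeries ℤ B) :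
    m x (m x y) = m (m x x) y := by
  ext n
  rw [hm.coeff_right_nested hq.map_zero, hm.coeff_left_nested hq.map_add]
  refine finsum_eq_finsum_of_involutive (hasFiniteSupport_rightNestedTerm x x y n hq.map_zero)
    (hasFiniteSupport_leftNestedTerm x x y n hq.map_zero) Prod.swap_swap
    (fun ⟨i, j⟩ => ?_) (fun ⟨i, j⟩ hij => ?_)
  · simp only [rightNestedTerm, leftNestedTerm, Prod.swap_prod_mk]
    rw [sub_right_comm n j i, add_comm j i]
    exact hq.twistTerm_left_alternative n i j _ _ _
  · obtain rfl : j = i := congrArg Prod.fst hij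
    exact hq.twistTerm_left_alternative_diag n j _ _

lemma right_alternative (hq : IsQuadraticInvolution conj) (x y : HahnSeries ℤ B) :
    m (m x y) y = m x (m y y) := by
  ext n
  rw [hm.coeff_right_nested hq.map_zero, hm.coeff_left_nested hq.map_add]
  refine finsum_eq_finsum_of_involutive (e := fun p => (p.1, n - p.1 - p.2))
    (hasFiniteSupport_leftNestedTerm x y y n hq.map_zero)
    (hasFiniteSupport_rightNestedTerm x y y n hq.map_zero) (fun p => by simp)
    (fun ⟨i, j⟩ => ?_) (fun ⟨i, j⟩ hij => ?_)
  · simp only [rightNestedTerm, leftNestedTerm, sub_sub_cancel,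
      show i + (n - i - j) = n - j by ring]
    exact hq.twistTerm_right_alternative n i j _ _ _
  · have hj : n - i - j = j := congrArg Prod.snd hij
    simp only [rightNestedTerm, leftNestedTerm]
    rw [hj, show n - i = j + j by omega]
    exact hq.twistTerm_right_alternative_diag i j _ _

end IsTwistedLaurentMul

/-- Let `B` be a quadratic associative division algebra over `K` with involution
`b ↦ b̄`, and let `m` be the multiplication on the formal Laurent series `B((t))`
(modelled as Hahn series over `ℤ`) twisted by the involution, i.e. determined
coefficientwise by the `twistTerm` convolution. Then `m` is alternative, and
`ν(Σ tⁱbᵢ) = min{i : bᵢ ≠ 0}` is a valuation: `ν(xy) = ν(x) + ν(y)` for nonzero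
`x, y` (in particular `xy ≠ 0`). -/
theorem twisted_laurent_alternative_and_valuation
    (K : Type*) [Field K] (B : Type*) [DivisionRing B] [Algebra K B]
    (conj : B → B)
    (hadd : ∀ x y : B, conj (x + y) = conj x + conj y)
    (hanti : ∀ x y : B, conj (x * y) = conj y * conj x)
    (hinv : ∀ x : B, conj (conj x) = x)
    (htr : ∀ b : B, ∃ k : K, b + conj b = algebraMap K B k)
    (hnm : ∀ b : B, ∃ k : K, b * conj b = algebraMap K B k)
    (m : HahnSeries ℤ B → HahnSeries ℤ B → HahnSeries ℤ B)
    (hm : ∀ (x y : HahnSeries ℤ B) (n : ℤ), (m x y).coeff n =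
        ∑ᶠ i : ℤ, twistTerm conj i (n - i) (x.coeff i) (y.coeff (n - i))) :
    (∀ x y : HahnSeries ℤ B, m x (m x y) = m (m x x) y) ∧
    (∀ x y : HahnSeries ℤ B, m (m x y) y = m x (m y y)) ∧
    (∀ x y : HahnSeries ℤ B, x ≠ 0 → y ≠ 0 →
        m x y ≠ 0 ∧ (m x y).order = x.order + y.order) := by
  have hq : IsQuadraticInvolution conj :=
    { map_add := hadd
      map_mul_rev := hanti
      conj_conj := hinv
      commute_add_conj := fun a b => by
        obtain ⟨k, hk⟩ := htr b
        exact hk ▸ Algebra.commute_algebraMap_left k a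
      commute_mul_conj := fun a b => by
        obtain ⟨k, hk⟩ := hnm b
        exact hk ▸ Algebra.commute_algebraMap_left k a }
  have hm : IsTwistedLaurentMul conj m := hm
  exact ⟨hm.left_alternative hq, hm.right_alternative hq,
    fun _ _ hx hy => hm.ne_zero_and_order_eq hq.conj_eq_zero_iff hx hy⟩
end
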